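/- arXiv:2112.07997 — 9 statements merged into one kernel-verified Lean document; each statement's English description precedes it below -/
import Mathlib

section
/- For all real x > 0, one has (√π/2)·e^{x²}·Erfc(x) > x(5+2x²)/(3+12x²+4x⁴), where Erfc(x) = (2/√π)∫_x^∞ e^{-t²} dt. -/
open MeasureTheory Real Set Filter

noncomputable def Erfc (x : ℝ) : ℝ :=
  (2 / Real.sqrt π) * ∫ t in Set.Ioi x, Real.exp (-t ^ 2)

namespace ErfcAux

noncomputable def F (t : ℝ) : ℝ :=
  -(Real.exp (-t ^ 2) * (t * (5 + 2 * t ^ 2)) / (3 + 12 * t ^ 2 + 4 * t ^ 4))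

lemma D_pos (t : ℝ) : (0:ℝ) < 3 + 12 * t ^ 2 + 4 * t ^ 4 := by positivity

lemma hasDerivAt_F (t : ℝ) :
    HasDerivAt F (Real.exp (-t ^ 2) - 24 * Real.exp (-t ^ 2) / (3 + 12 * t ^ 2 + 4 * t ^ 4) ^ 2) t := by
  have hD : (3 + 12 * t ^ 2 + 4 * t ^ 4 : ℝ) ≠ 0 := (D_pos t).ne'
  have he : HasDerivAt (fun t : ℝ => Real.exp (-t ^ 2)) (Real.exp (-t ^ 2) * (-2 * t)) t := by
    have h1 : HasDerivAt (fun t : ℝ => -t ^ 2) (-2 * t) t := by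
      simpa using ((hasDerivAt_pow 2 t).fun_neg)
    exact (Real.hasDerivAt_exp _).comp t h1
  have hN : HasDerivAt (fun t : ℝ => t * (5 + 2 * t ^ 2)) (5 + 6 * t ^ 2) t := by
    have := ((hasDerivAt_id t).fun_mul (((hasDerivAt_pow 2 t).const_mul 2).const_add 5))
    refine this.congr_deriv ?_
    simp [id]
    ring
  have hDd : HasDerivAt (fun t : ℝ => 3 + 12 * t ^ 2 + 4 * t ^ 4) (24 * t + 16 * t ^ 3) t := by
    have := ((((hasDerivAt_pow 2 t).const_mul 12).const_add 3).fun_add ((hasDerivAt_pow 4 t).const_mul 4))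
    refine this.congr_deriv ?_
    norm_num
    ring
  have := (((he.fun_mul hN).fun_div hDd hD)).fun_neg
  refine this.congr_deriv ?_
  field_simp
  ring

lemma gauss_int : Integrable (fun t : ℝ => Real.exp (-t ^ 2)) := by
  simpa using integrable_exp_neg_mul_sq (one_pos)

lemma integrable_part (x : ℝ) :
    IntegrableOn (fun t => 24 * Real.exp (-t ^ 2) / (3 + 12 * t ^ 2 + 4 * t ^ 4) ^ 2)
      (Ioi x) := by
  have hg' : IntegrableOn (fun t : ℝ => Real.exp (-t ^ 2)) (Ioi x) := gauss_int.integrableOn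
  refine Integrable.mono (hg'.const_mul (24/9)) ?_ ?_
  · apply Continuous.aestronglyMeasurable
    apply Continuous.div
    · fun_prop
    · fun_prop
    · intro t; have := D_pos t; positivity
  · filter_upwards with t
    have hD := D_pos t
    have hD9 : (9:ℝ) ≤ (3 + 12 * t ^ 2 + 4 * t ^ 4) ^ 2 := by nlinarith [sq_nonneg t, sq_nonneg (t^2)]
    rw [Real.norm_eq_abs, Real.norm_eq_abs, abs_of_nonneg (by positivity), abs_of_nonneg (by positivity)]
    rw [div_le_iff₀ (by positivity)]
    have := Real.exp_pos (-t ^ 2)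
    nlinarith

lemma F_deriv_integrable (x : ℝ) :
    IntegrableOn (fun t => Real.exp (-t ^ 2) - 24 * Real.exp (-t ^ 2) / (3 + 12 * t ^ 2 + 4 * t ^ 4) ^ 2)
      (Ioi x) := by
  have hg' : IntegrableOn (fun t : ℝ => Real.exp (-t ^ 2)) (Ioi x) := gauss_int.integrableOn
  exact hg'.sub (integrable_part x)

lemma tendsto_F : Tendsto F atTop (nhds 0) := by
  have hexp : Tendsto (fun t : ℝ => Real.exp (-t ^ 2)) atTop (nhds 0) := by
    apply Real.tendsto_exp_atBot.comp
    apply tendsto_neg_atBot_iff.mpr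
    exact tendsto_pow_atTop (by norm_num)
  have h : Tendsto (fun t => -F t) atTop (nhds 0) := by
    apply squeeze_zero' (g := fun t : ℝ => Real.exp (-t ^ 2)) ?_ ?_ hexp
    · filter_upwards [eventually_ge_atTop (0:ℝ)] with t ht
      have := D_pos t
      have : 0 ≤ Real.exp (-t ^ 2) * (t * (5 + 2 * t ^ 2)) := by positivity
      simp only [F, neg_neg]
      positivity
    · filter_upwards [eventually_ge_atTop (1:ℝ)] with t ht
      have hD := D_pos t
      simp only [F, neg_neg]
      rw [div_le_iff₀ hD]
      have hN : t * (5 + 2 * t ^ 2) ≤ 3 + 12 * t ^ 2 + 4 * t ^ 4 := by nlinarith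
      have he := Real.exp_pos (-t ^ 2)
      have hle := Real.exp_le_one_iff.mpr (by nlinarith : -t^2 ≤ 0)
      nlinarith
  simpa using h.neg

set_option maxHeartbeats 1000000 in
lemma key (x : ℝ) :
    ∫ t in Ioi x, Real.exp (-t ^ 2) =
      Real.exp (-x ^ 2) * (x * (5 + 2 * x ^ 2)) / (3 + 12 * x ^ 2 + 4 * x ^ 4) +
        ∫ t in Ioi x, 24 * Real.exp (-t ^ 2) / (3 + 12 * t ^ 2 + 4 * t ^ 4) ^ 2 := by
  have h := integral_Ioi_of_hasDerivAt_of_tendsto' (a := x) (f := F)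
    (f' := fun t => Real.exp (-t ^ 2) - 24 * Real.exp (-t ^ 2) / (3 + 12 * t ^ 2 + 4 * t ^ 4) ^ 2)
    (fun t _ => hasDerivAt_F t) (F_deriv_integrable x) tendsto_F
  have hg : IntegrableOn (fun t : ℝ => Real.exp (-t ^ 2)) (Ioi x) := gauss_int.integrableOn
  rw [integral_sub hg (integrable_part x)] at h
  simp only [F] at h
  linarith [h]

set_option maxHeartbeats 1000000 in
lemma pos_part (x : ℝ) :
    0 < ∫ t in Ioi x, 24 * Real.exp (-t ^ 2) / (3 + 12 * t ^ 2 + 4 * t ^ 4) ^ 2 := by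
  rw [setIntegral_pos_iff_support_of_nonneg_ae ?_ (integrable_part x)]
  · have : Function.support (fun t : ℝ => 24 * Real.exp (-t ^ 2) / (3 + 12 * t ^ 2 + 4 * t ^ 4) ^ 2) = Set.univ := by
      ext t; simp only [Function.mem_support, Set.mem_univ, iff_true]
      have := D_pos t; positivity
    rw [this, Set.univ_inter]
    simp [Real.volume_Ioi]
  · filter_upwards with t
    have := D_pos t; positivity

end ErfcAux

theorem erfc_refined_lower_bound (x : ℝ) (hx : 0 < x) :
    x * (5 + 2 * x ^ 2) / (3 + 12 * x ^ 2 + 4 * x ^ 4) <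
      (Real.sqrt π / 2) * Real.exp (x ^ 2) * Erfc x := by
  have hπ : (0:ℝ) < Real.sqrt π := Real.sqrt_pos.mpr Real.pi_pos
  have h : (Real.sqrt π / 2) * Real.exp (x ^ 2) * Erfc x
      = Real.exp (x ^ 2) * ∫ t in Set.Ioi x, Real.exp (-t ^ 2) := by
    unfold Erfc; field_simp
  rw [h, ErfcAux.key x]
  have h2 := ErfcAux.pos_part x
  have hE := Real.exp_pos (x ^ 2)
  have h1 : Real.exp (x ^ 2) *
      (Real.exp (-x ^ 2) * (x * (5 + 2 * x ^ 2)) / (3 + 12 * x ^ 2 + 4 * x ^ 4) +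
        ∫ t in Set.Ioi x, 24 * Real.exp (-t ^ 2) / (3 + 12 * t ^ 2 + 4 * t ^ 4) ^ 2)
      = x * (5 + 2 * x ^ 2) / (3 + 12 * x ^ 2 + 4 * x ^ 4) +
        Real.exp (x ^ 2) * ∫ t in Set.Ioi x, 24 * Real.exp (-t ^ 2) / (3 + 12 * t ^ 2 + 4 * t ^ 4) ^ 2 := by
    rw [Real.exp_neg]
    have hD := (ErfcAux.D_pos x).ne'
    field_simp
  rw [h1]
  nlinarith [mul_pos hE h2]
end

section
/- For all real x > 0, one has (√π/2)·e^{x²}·Erfc(x) < (1+x²)/(x(3+2x²)), where Erfc(x) = (2/√π)∫_x^∞ e^{-t²} dt. -/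
open MeasureTheory Real Set Filter Topology
open scoped ENNReal

noncomputable def g (t : ℝ) : ℝ :=
  -(Real.exp (-t ^ 2) * (1 + t ^ 2) / (t * (3 + 2 * t ^ 2)))

noncomputable def g' (t : ℝ) : ℝ :=
  Real.exp (-t ^ 2) * (4 * t ^ 6 + 12 * t ^ 4 + 9 * t ^ 2 + 3) /
    (4 * t ^ 6 + 12 * t ^ 4 + 9 * t ^ 2)

lemma hasDerivAt_g {t : ℝ} (ht : 0 < t) : HasDerivAt g (g' t) t := by
  have h1 : HasDerivAt (fun t : ℝ => -t ^ 2) (-(2 * t)) t := by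
    simpa using (hasDerivAt_pow 2 t).fun_neg
  have he : HasDerivAt (fun t : ℝ => Real.exp (-t ^ 2))
      (Real.exp (-t ^ 2) * (-(2 * t))) t := (Real.hasDerivAt_exp _).comp t h1
  have hp : HasDerivAt (fun t : ℝ => 1 + t ^ 2) (2 * t) t := by
    simpa using ((hasDerivAt_pow 2 t).const_add 1)
  have hnum : HasDerivAt (fun t : ℝ => Real.exp (-t ^ 2) * (1 + t ^ 2))
      (Real.exp (-t ^ 2) * (-(2 * t)) * (1 + t ^ 2) + Real.exp (-t ^ 2) * (2 * t)) t :=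
    he.mul hp
  have hden : HasDerivAt (fun t : ℝ => t * (3 + 2 * t ^ 2)) (3 + 6 * t ^ 2) t := by
    have h2 : HasDerivAt (fun t : ℝ => 3 + 2 * t ^ 2) (2 * (2 * t)) t := by
      simpa using ((hasDerivAt_pow 2 t).const_mul 2).const_add 3
    have := (hasDerivAt_id t).fun_mul h2
    refine this.congr_deriv ?_
    simp only [id_eq]; ring
  have hne : t * (3 + 2 * t ^ 2) ≠ 0 := by positivity
  have hd := (hnum.div hden hne).fun_neg
  refine hd.congr_deriv ?_
  rw [g']
  have h3 : (4 * t ^ 6 + 12 * t ^ 4 + 9 * t ^ 2) ≠ 0 := by positivity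
  field_simp
  ring

lemma tendsto_g : Tendsto g atTop (𝓝 0) := by
  have h0 : Tendsto (fun t : ℝ => Real.exp (-t ^ 2)) atTop (𝓝 0) := by
    have h1 : Tendsto (fun t : ℝ => -t ^ 2) atTop atBot :=
      tendsto_neg_atTop_atBot.comp (tendsto_pow_atTop two_ne_zero)
    exact Real.tendsto_exp_atBot.comp h1
  have h0' : Tendsto (fun t : ℝ => -Real.exp (-t ^ 2)) atTop (𝓝 (-0)) := h0.neg
  rw [neg_zero] at h0'
  refine tendsto_of_tendsto_of_tendsto_of_le_of_le' h0' tendsto_const_nhds ?_ ?_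
  · filter_upwards [eventually_ge_atTop (1 : ℝ)] with t ht
    rw [g, neg_le_neg_iff]
    have h1 : (1 : ℝ) + t ^ 2 ≤ t * (3 + 2 * t ^ 2) := by nlinarith
    have h2 : (0 : ℝ) < t * (3 + 2 * t ^ 2) := by positivity
    rw [div_le_iff₀ h2]
    nlinarith [Real.exp_pos (-t ^ 2), (Real.exp_pos (-t^2)).le, h1]
  · filter_upwards [eventually_ge_atTop (1 : ℝ)] with t ht
    have h2 : (0 : ℝ) < t * (3 + 2 * t ^ 2) := by positivity
    have := Real.exp_pos (-t ^ 2)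
    rw [g]
    have : 0 ≤ Real.exp (-t ^ 2) * (1 + t ^ 2) / (t * (3 + 2 * t ^ 2)) := by positivity
    linarith

theorem erfc_refined_upper_bound (x : ℝ) (hx : 0 < x) :
    (Real.sqrt π / 2) * Real.exp (x ^ 2) * Erfc x <
      (1 + x ^ 2) / (x * (3 + 2 * x ^ 2)) := by
  have hderiv : ∀ t ∈ Ioi x, HasDerivAt g (g' t) t := fun t ht => hasDerivAt_g (hx.trans ht)
  have hg'nonneg : ∀ t ∈ Ioi x, 0 ≤ g' t := by
    intro t ht
    have ht' : 0 < t := hx.trans ht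
    rw [g']
    positivity
  have hcont : ContinuousWithinAt g (Ici x) x :=
    (hasDerivAt_g hx).continuousAt.continuousWithinAt
  have hg'int : IntegrableOn g' (Ioi x) :=
    integrableOn_Ioi_deriv_of_nonneg hcont hderiv hg'nonneg tendsto_g
  have hftc : ∫ t in Ioi x, g' t = 0 - g x :=
    integral_Ioi_of_hasDerivAt_of_tendsto hcont hderiv hg'int tendsto_g
  have hIexp : IntegrableOn (fun t : ℝ => Real.exp (-t ^ 2)) (Ioi x) := by
    have := (integrable_exp_neg_mul_sq (by norm_num : (0:ℝ) < 1)).integrableOn (s := Ioi x)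
    simpa using this
  -- strict inequality
  have key : ∫ t in Ioi x, Real.exp (-t ^ 2) < ∫ t in Ioi x, g' t := by
    have hsub : IntegrableOn (fun t => g' t - Real.exp (-t ^ 2)) (Ioi x) := hg'int.sub hIexp
    have hpos : 0 < ∫ t in Ioi x, (g' t - Real.exp (-t ^ 2)) := by
      have hlt : ∀ t ∈ Ioi x, Real.exp (-t ^ 2) < g' t := by
        intro t ht
        have ht' : 0 < t := hx.trans ht
        rw [g']
        have hp : (0:ℝ) < 4 * t ^ 6 + 12 * t ^ 4 + 9 * t ^ 2 := by positivity
        rw [lt_div_iff₀ hp]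
        nlinarith [Real.exp_pos (-t ^ 2)]
      rw [setIntegral_pos_iff_support_of_nonneg_ae]
      · have hss : Ioi x ⊆ Function.support (fun t => g' t - Real.exp (-t ^ 2)) ∩ Ioi x :=
          fun t ht => ⟨sub_ne_zero.mpr (hlt t ht).ne', ht⟩
        calc (0:ℝ≥0∞) < volume (Ioi x) := by simp [Real.volume_Ioi]
          _ ≤ _ := measure_mono hss
      · filter_upwards [ae_restrict_mem measurableSet_Ioi] with t ht
        exact sub_nonneg.mpr (hlt t ht).le
      · exact hsub
    have := integral_sub hg'int hIexp
    rw [this] at hpos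
    linarith
  rw [hftc, zero_sub, g, neg_neg] at key
  have hπ : (0 : ℝ) < Real.sqrt π := Real.sqrt_pos.mpr pi_pos
  rw [Erfc]
  have heq : Real.sqrt π / 2 * Real.exp (x ^ 2) *
      (2 / Real.sqrt π * ∫ t in Ioi x, Real.exp (-t ^ 2)) =
      Real.exp (x ^ 2) * ∫ t in Ioi x, Real.exp (-t ^ 2) := by
    field_simp
  rw [heq]
  calc Real.exp (x ^ 2) * ∫ t in Ioi x, Real.exp (-t ^ 2)
      < Real.exp (x ^ 2) * (Real.exp (-x ^ 2) * (1 + x ^ 2) / (x * (3 + 2 * x ^ 2))) :=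
        mul_lt_mul_of_pos_left key (Real.exp_pos _)
    _ = (1 + x ^ 2) / (x * (3 + 2 * x ^ 2)) := by
        rw [mul_div_assoc', ← mul_assoc, ← Real.exp_add]
        simp
end

section
/- For all real y > 0, one has 1/(y+√(y²+2)) < e^{y²}·∫_y^∞ e^{-t²} dt ≤ 1/(y+√(y²+4/π)). -/
open MeasureTheory Real Set Filter Topology

namespace GaussTailAux

noncomputable def f (t : ℝ) : ℝ := Real.exp (-t ^ 2)

lemma f_cont : Continuous f :=
  Real.continuous_exp.comp ((continuous_pow 2).neg)

lemma f_integrable : Integrable f := by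
  have := integrable_exp_neg_mul_sq (b := (1 : ℝ)) one_pos
  exact (by simpa [neg_mul, one_mul] using this : Integrable fun t : ℝ => Real.exp (-t ^ 2))

noncomputable def I (y : ℝ) : ℝ := ∫ t in Ioi y, f t

lemma I_eq (y : ℝ) :
    I y = (∫ t, f t) - ((∫ t in Iic (0 : ℝ), f t) + ∫ t in (0 : ℝ)..y, f t) := by
  have h1 : (∫ t in Iic y, f t) + I y = ∫ t, f t :=
    intervalIntegral.integral_Iic_add_Ioi f_integrable.integrableOn f_integrable.integrableOn
  have h2 : (∫ t in Iic y, f t) - (∫ t in Iic (0 : ℝ), f t) = ∫ t in (0 : ℝ)..y, f t :=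
    intervalIntegral.integral_Iic_sub_Iic f_integrable.integrableOn f_integrable.integrableOn
  linarith

lemma I_hasDeriv (y : ℝ) : HasDerivAt I (-f y) y := by
  have h : HasDerivAt (fun u : ℝ => ∫ t in (0 : ℝ)..u, f t) (f y) y :=
    (f_cont.integral_hasStrictDerivAt 0 y).hasDerivAt
  have h2 : HasDerivAt
      (fun u : ℝ => (∫ t, f t) - ((∫ t in Iic (0 : ℝ), f t) + ∫ t in (0 : ℝ)..u, f t))
      (-f y) y := ((h.const_add _).const_sub _)
  have heq : I = fun u : ℝ =>
      (∫ t, f t) - ((∫ t in Iic (0 : ℝ), f t) + ∫ t in (0 : ℝ)..u, f t) :=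
    funext I_eq
  rw [heq]
  exact h2

lemma I_nonneg (y : ℝ) : 0 ≤ I y :=
  setIntegral_nonneg measurableSet_Ioi fun t _ => (Real.exp_pos _).le

lemma I_tendsto : Tendsto I atTop (𝓝 0) := by
  apply squeeze_zero' (Eventually.of_forall fun y => I_nonneg y)
    (g := fun y => Real.exp (-y))
  · filter_upwards [eventually_ge_atTop (1 : ℝ)] with y hy
    have hle : I y ≤ ∫ t in Ioi y, Real.exp (-t) := by
      have hexp : IntegrableOn (fun t : ℝ => Real.exp (-t)) (Ioi y) := by
        simpa using exp_neg_integrableOn_Ioi y one_pos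
      apply setIntegral_mono_on f_integrable.integrableOn hexp measurableSet_Ioi
      intro t ht
      have ht1 : (1 : ℝ) ≤ t := le_trans hy (le_of_lt ht)
      have : t ≤ t ^ 2 := by nlinarith
      exact Real.exp_le_exp.2 (by linarith)
    rw [integral_exp_neg_Ioi] at hle
    exact hle
  · exact Real.tendsto_exp_neg_atTop_nhds_zero

lemma exp_neg_sq_tendsto : Tendsto (fun z : ℝ => Real.exp (-z ^ 2)) atTop (𝓝 0) := by
  have := Real.tendsto_exp_neg_atTop_nhds_zero.comp (tendsto_pow_atTop (two_ne_zero) (α := ℝ))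
  exact this

lemma sqrt_sub_le {a z : ℝ} (ha : 0 ≤ a) (hz : 0 ≤ z) :
    Real.sqrt (z ^ 2 + a) - z ≤ Real.sqrt a := by
  have h : Real.sqrt (z ^ 2 + a) ≤ z + Real.sqrt a := by
    rw [show z + Real.sqrt a = Real.sqrt ((z + Real.sqrt a) ^ 2) from
      (Real.sqrt_sq (by positivity)).symm]
    apply Real.sqrt_le_sqrt
    nlinarith [Real.sq_sqrt ha, Real.sqrt_nonneg a]
  linarith

lemma self_le_sqrt {a z : ℝ} (ha : 0 ≤ a) (hz : 0 ≤ z) :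
    z ≤ Real.sqrt (z ^ 2 + a) :=
  (Real.le_sqrt hz (by positivity)).2 (by linarith)

lemma term_tendsto {a : ℝ} (ha : 0 ≤ a) (c : ℝ) :
    Tendsto (fun z : ℝ => c * ((Real.sqrt (z ^ 2 + a) - z) * Real.exp (-z ^ 2)))
      atTop (𝓝 0) := by
  have h : Tendsto (fun z : ℝ => (Real.sqrt (z ^ 2 + a) - z) * Real.exp (-z ^ 2))
      atTop (𝓝 0) := by
    apply squeeze_zero' (g := fun z => Real.sqrt a * Real.exp (-z ^ 2))
    · filter_upwards [eventually_ge_atTop (0 : ℝ)] with z hz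
      have h1 := self_le_sqrt ha hz
      exact mul_nonneg (by linarith) (Real.exp_pos _).le
    · filter_upwards [eventually_ge_atTop (0 : ℝ)] with z hz
      exact mul_le_mul_of_nonneg_right (sqrt_sub_le ha hz) (Real.exp_pos _).le
    · simpa using (exp_neg_sq_tendsto.const_mul (Real.sqrt a))
  simpa using h.const_mul c

lemma sqrt_hasDeriv {c : ℝ} (hc : 0 < c) (z : ℝ) :
    HasDerivAt (fun z : ℝ => Real.sqrt (z ^ 2 + c)) (z / Real.sqrt (z ^ 2 + c)) z := by
  have h1 : HasDerivAt (fun z : ℝ => z ^ 2 + c) ((2 : ℕ) * z ^ 1) z :=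
    (hasDerivAt_pow 2 z).add_const c
  have hpos : (0 : ℝ) < z ^ 2 + c := by positivity
  have h2 := h1.sqrt (ne_of_gt hpos)
  have hs : 0 < Real.sqrt (z ^ 2 + c) := Real.sqrt_pos.2 hpos
  convert h2 using 1
  field_simp
  ring

lemma exp_neg_sq_hasDeriv (z : ℝ) :
    HasDerivAt (fun z : ℝ => Real.exp (-z ^ 2)) (-(2 * z) * Real.exp (-z ^ 2)) z := by
  have h := ((hasDerivAt_pow 2 z).neg).exp
  convert h using 1
  all_goals simp only [Pi.neg_apply]
  push_cast
  ring


noncomputable def Dlo (z : ℝ) : ℝ :=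
  -f z - ((z / Real.sqrt (z ^ 2 + 2) - 1) / 2 * Real.exp (-z ^ 2)
    + (Real.sqrt (z ^ 2 + 2) - z) / 2 * (-(2 * z) * Real.exp (-z ^ 2)))

lemma chi_hasDeriv (z : ℝ) :
    HasDerivAt (fun z : ℝ => I z - (Real.sqrt (z ^ 2 + 2) - z) / 2 * Real.exp (-z ^ 2))
      (Dlo z) z :=
  (I_hasDeriv z).sub
    ((((sqrt_hasDeriv two_pos z).sub (hasDerivAt_id z)).div_const 2).mul
      (exp_neg_sq_hasDeriv z))

lemma Dlo_neg {z : ℝ} (hz : 0 ≤ z) : Dlo z < 0 := by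
  set s := Real.sqrt (z ^ 2 + 2) with hs_def
  have hpos : (0 : ℝ) < z ^ 2 + 2 := by positivity
  have hs : 0 < s := Real.sqrt_pos.2 hpos
  have hs2 : s ^ 2 = z ^ 2 + 2 := Real.sq_sqrt hpos.le
  have hsq : (s * (1 + 2 * z ^ 2)) ^ 2 = (2 * z ^ 3 + 3 * z) ^ 2 + 2 := by
    linear_combination (1 + 2 * z ^ 2) ^ 2 * hs2
  have hkey : 2 * z ^ 3 + 3 * z < s * (1 + 2 * z ^ 2) := by
    nlinarith [hs, hsq, mul_pos hs (show (0:ℝ) < 1 + 2 * z ^ 2 by positivity),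
      mul_nonneg (mul_nonneg hz hz) hz]
  have hD : Dlo z = Real.exp (-z ^ 2) *
      ((2 * z ^ 3 + 3 * z - s * (1 + 2 * z ^ 2)) / (2 * s)) := by
    simp only [Dlo, f, ← hs_def]
    field_simp
    linear_combination (2 * z) * hs2
  rw [hD]
  exact mul_neg_of_pos_of_neg (Real.exp_pos _)
    (div_neg_of_neg_of_pos (by linarith) (by positivity))

lemma lower_bound {y : ℝ} (hy : 0 ≤ y) :
    (Real.sqrt (y ^ 2 + 2) - y) / 2 * Real.exp (-y ^ 2) < I y := by
  set χ : ℝ → ℝ := fun z => I z - (Real.sqrt (z ^ 2 + 2) - z) / 2 * Real.exp (-z ^ 2)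
    with hχ
  have hd : ∀ z : ℝ, HasDerivAt χ (Dlo z) z := chi_hasDeriv
  have hanti : StrictAntiOn χ (Ici 0) := by
    apply strictAntiOn_of_deriv_neg (convex_Ici 0)
      (fun z _ => (hd z).continuousAt.continuousWithinAt)
    intro z hz
    rw [interior_Ici] at hz
    rw [(hd z).deriv]
    exact Dlo_neg hz.le
  have htend : Tendsto χ atTop (𝓝 0) := by
    have h2 := term_tendsto (show (0:ℝ) ≤ 2 by norm_num) (1/2)
    have heq : χ = fun z => I z -
        1 / 2 * ((Real.sqrt (z ^ 2 + 2) - z) * Real.exp (-z ^ 2)) := by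
      funext z; rw [hχ]; ring
    rw [heq]
    simpa using I_tendsto.sub h2
  have h1 : χ (y + 1) < χ y :=
    hanti (show y ∈ Ici 0 from hy) (show y + 1 ∈ Ici 0 by simp; linarith)
      (by linarith)
  have h2 : 0 ≤ χ (y + 1) := by
    apply le_of_tendsto htend
    filter_upwards [eventually_ge_atTop (y + 1)] with z hz
    rcases eq_or_lt_of_le hz with h | h
    · rw [← h]
    · exact (hanti (show y + 1 ∈ Ici 0 by simp; linarith)
        (show z ∈ Ici 0 by simp; linarith) h).le
  have : 0 < χ y := lt_of_le_of_lt h2 h1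
  rw [hχ] at this
  simpa using by linarith [this] 


noncomputable def Dup (z : ℝ) : ℝ :=
  π / 4 * ((z / Real.sqrt (z ^ 2 + 4 / π) - 1) * Real.exp (-z ^ 2)
    + (Real.sqrt (z ^ 2 + 4 / π) - z) * (-(2 * z) * Real.exp (-z ^ 2))) - (-f z)

lemma b_pos : (0 : ℝ) < 4 / π := by positivity

lemma psi_hasDeriv (z : ℝ) :
    HasDerivAt (fun z : ℝ => π / 4 * ((Real.sqrt (z ^ 2 + 4 / π) - z) * Real.exp (-z ^ 2))
      - I z) (Dup z) z :=
  (((((sqrt_hasDeriv b_pos z).sub (hasDerivAt_id z)).mul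
      (exp_neg_sq_hasDeriv z)).const_mul (π / 4)).sub (I_hasDeriv z))

lemma Dup_eq (z : ℝ) :
    Dup z = Real.exp (-z ^ 2) *
      ((Real.sqrt (z ^ 2 + 4 / π) * (2 * π * z ^ 2 + 4 - π)
        - (2 * π * z ^ 3 + (8 - π) * z)) / (4 * Real.sqrt (z ^ 2 + 4 / π))) := by
  set s := Real.sqrt (z ^ 2 + 4 / π) with hs_def
  have hpos : (0 : ℝ) < z ^ 2 + 4 / π := by positivity
  have hs : 0 < s := Real.sqrt_pos.2 hpos
  have hs2 : s ^ 2 = z ^ 2 + 4 / π := Real.sq_sqrt hpos.le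
  have hπs2 : π * s ^ 2 = π * z ^ 2 + 4 := by
    rw [hs2, mul_add, mul_div_cancel₀ _ Real.pi_ne_zero]
  simp only [Dup, f, ← hs_def]
  field_simp
  linear_combination (-2 * z) * hπs2

lemma Dup_nonneg {z : ℝ} (hz : 0 ≤ z)
    (hcase : 2 * π * (π - 2) * z ^ 2 ≤ (4 - π) ^ 2) : 0 ≤ Dup z := by
  rw [Dup_eq]
  set s := Real.sqrt (z ^ 2 + 4 / π) with hs_def
  have hpos : (0 : ℝ) < z ^ 2 + 4 / π := by positivity
  have hs : 0 < s := Real.sqrt_pos.2 hpos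
  have hs2 : s ^ 2 = z ^ 2 + 4 / π := Real.sq_sqrt hpos.le
  have hπs2 : π * s ^ 2 = π * z ^ 2 + 4 := by
    rw [hs2, mul_add, mul_div_cancel₀ _ Real.pi_ne_zero]
  have hπ1 : 3.141592 < π := Real.pi_gt_d6
  have hπ2 : π < 3.15 := Real.pi_lt_d2
  have hsqb : π * (s * (2 * π * z ^ 2 + 4 - π)) ^ 2
      = (π * z ^ 2 + 4) * (2 * π * z ^ 2 + 4 - π) ^ 2 := by
    linear_combination (2 * π * z ^ 2 + 4 - π) ^ 2 * hπs2
  have ha : 0 ≤ 2 * π * z ^ 3 + (8 - π) * z := by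
    have h3 : 0 ≤ z ^ 3 := pow_nonneg hz 3
    nlinarith
  have hbpos : 0 < s * (2 * π * z ^ 2 + 4 - π) := by nlinarith [sq_nonneg z]
  have hdiff : π * ((s * (2 * π * z ^ 2 + 4 - π)) ^ 2
      - (2 * π * z ^ 3 + (8 - π) * z) ^ 2)
      = 4 * (4 - π) ^ 2 - 8 * (π * (π - 2)) * z ^ 2 := by
    linear_combination hsqb
  have hb2a2 : (2 * π * z ^ 3 + (8 - π) * z) ^ 2
      ≤ (s * (2 * π * z ^ 2 + 4 - π)) ^ 2 := by nlinarith
  have hkey : 2 * π * z ^ 3 + (8 - π) * z ≤ s * (2 * π * z ^ 2 + 4 - π) := by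
    nlinarith
  exact mul_nonneg (Real.exp_pos _).le
    (div_nonneg (by linarith) (by positivity))

lemma Dup_nonpos {z : ℝ} (hz : 0 ≤ z)
    (hcase : (4 - π) ^ 2 ≤ 2 * π * (π - 2) * z ^ 2) : Dup z ≤ 0 := by
  rw [Dup_eq]
  set s := Real.sqrt (z ^ 2 + 4 / π) with hs_def
  have hpos : (0 : ℝ) < z ^ 2 + 4 / π := by positivity
  have hs : 0 < s := Real.sqrt_pos.2 hpos
  have hs2 : s ^ 2 = z ^ 2 + 4 / π := Real.sq_sqrt hpos.le
  have hπs2 : π * s ^ 2 = π * z ^ 2 + 4 := by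
    rw [hs2, mul_add, mul_div_cancel₀ _ Real.pi_ne_zero]
  have hπ1 : 3.141592 < π := Real.pi_gt_d6
  have hπ2 : π < 3.15 := Real.pi_lt_d2
  have hsqb : π * (s * (2 * π * z ^ 2 + 4 - π)) ^ 2
      = (π * z ^ 2 + 4) * (2 * π * z ^ 2 + 4 - π) ^ 2 := by
    linear_combination (2 * π * z ^ 2 + 4 - π) ^ 2 * hπs2
  have ha : 0 ≤ 2 * π * z ^ 3 + (8 - π) * z := by
    have h3 : 0 ≤ z ^ 3 := pow_nonneg hz 3
    nlinarith
  have hbpos : 0 < s * (2 * π * z ^ 2 + 4 - π) := by nlinarith [sq_nonneg z]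
  have hdiff : π * ((s * (2 * π * z ^ 2 + 4 - π)) ^ 2
      - (2 * π * z ^ 3 + (8 - π) * z) ^ 2)
      = 4 * (4 - π) ^ 2 - 8 * (π * (π - 2)) * z ^ 2 := by
    linear_combination hsqb
  have hb2a2 : (s * (2 * π * z ^ 2 + 4 - π)) ^ 2
      ≤ (2 * π * z ^ 3 + (8 - π) * z) ^ 2 := by nlinarith
  have hkey : s * (2 * π * z ^ 2 + 4 - π) ≤ 2 * π * z ^ 3 + (8 - π) * z := by
    nlinarith
  apply mul_nonpos_of_nonneg_of_nonpos (Real.exp_pos _).le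
  apply div_nonpos_of_nonpos_of_nonneg (by linarith) (by positivity)

lemma I_zero : I 0 = Real.sqrt π / 2 := by
  have h := integral_gaussian_Ioi 1
  simp only [neg_mul, one_mul, div_one] at h
  simpa [I, f] using h

lemma psi_zero : π / 4 * ((Real.sqrt ((0:ℝ) ^ 2 + 4 / π) - 0) * Real.exp (-(0:ℝ) ^ 2))
    - I 0 = 0 := by
  have h4 : Real.sqrt (4 / π) = 2 / Real.sqrt π := by
    rw [show (4 : ℝ) / π = (2 / Real.sqrt π) ^ 2 by
        rw [div_pow, Real.sq_sqrt Real.pi_pos.le]; norm_num,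
      Real.sqrt_sq (by positivity)]
  have hsπ : Real.sqrt π ≠ 0 := by positivity
  rw [I_zero]
  norm_num [h4]
  field_simp
  linarith [Real.sq_sqrt Real.pi_pos.le]

lemma upper_bound {y : ℝ} (hy : 0 ≤ y) :
    I y ≤ π / 4 * ((Real.sqrt (y ^ 2 + 4 / π) - y) * Real.exp (-y ^ 2)) := by
  set ψ : ℝ → ℝ := fun z =>
    π / 4 * ((Real.sqrt (z ^ 2 + 4 / π) - z) * Real.exp (-z ^ 2)) - I z with hψ
  have hd : ∀ z : ℝ, HasDerivAt ψ (Dup z) z := psi_hasDeriv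
  have hπ1 : 3.141592 < π := Real.pi_gt_d6
  have hπ2 : π < 3.15 := Real.pi_lt_d2
  suffices h : 0 ≤ ψ y by rw [hψ] at h; simp only at h; linarith
  by_cases hc : 2 * π * (π - 2) * y ^ 2 ≤ (4 - π) ^ 2
  · -- monotone on [0, y], ψ 0 = 0
    have hm : MonotoneOn ψ (Icc 0 y) := by
      apply monotoneOn_of_deriv_nonneg (convex_Icc 0 y)
        (fun z _ => (hd z).continuousAt.continuousWithinAt)
        (fun z _ => (hd z).differentiableAt.differentiableWithinAt)
      intro t ht
      rw [interior_Icc] at ht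
      rw [(hd t).deriv]
      apply Dup_nonneg ht.1.le
      have ht2 : t ^ 2 ≤ y ^ 2 := by nlinarith [ht.1, ht.2]
      have hfac : (0:ℝ) ≤ 2 * π * (π - 2) := by nlinarith
      nlinarith [mul_le_mul_of_nonneg_left ht2 hfac]
    have h0 : ψ 0 = 0 := psi_zero
    have := hm (show (0:ℝ) ∈ Icc 0 y from ⟨le_refl _, hy⟩)
      (show y ∈ Icc 0 y from ⟨hy, le_refl _⟩) hy
    linarith
  · push_neg at hc
    have ham : AntitoneOn ψ (Ici y) := by
      apply antitoneOn_of_deriv_nonpos (convex_Ici y)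
        (fun z _ => (hd z).continuousAt.continuousWithinAt)
        (fun z _ => (hd z).differentiableAt.differentiableWithinAt)
      intro t ht
      rw [interior_Ici] at ht
      rw [(hd t).deriv]
      apply Dup_nonpos (le_trans hy ht.le)
      have hyt : y < t := ht
      have ht2 : y ^ 2 ≤ t ^ 2 := by nlinarith [hy, hyt]
      have hfac : (0:ℝ) ≤ 2 * π * (π - 2) := by nlinarith
      nlinarith [mul_le_mul_of_nonneg_left ht2 hfac]
    have htend : Tendsto ψ atTop (𝓝 0) := by
      have h2 := term_tendsto b_pos.le (π / 4)
      have heq : ψ = fun z =>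
          π / 4 * ((Real.sqrt (z ^ 2 + 4 / π) - z) * Real.exp (-z ^ 2)) - I z := hψ
      rw [heq]
      simpa using h2.sub I_tendsto
    apply le_of_tendsto htend
    filter_upwards [eventually_ge_atTop y] with z hz
    exact ham (Set.mem_Ici.mpr le_rfl) (Set.mem_Ici.mpr hz) hz

end GaussTailAux

open GaussTailAux

theorem gaussian_tail_two_sided (y : ℝ) (hy : 0 < y) :
    1 / (y + Real.sqrt (y ^ 2 + 2)) <
      Real.exp (y ^ 2) * ∫ t in Set.Ioi y, Real.exp (-t ^ 2) ∧
    Real.exp (y ^ 2) * (∫ t in Set.Ioi y, Real.exp (-t ^ 2)) ≤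
      1 / (y + Real.sqrt (y ^ 2 + 4 / π)) := by
  have hIdef : (∫ t in Set.Ioi y, Real.exp (-t ^ 2)) = I y := rfl
  constructor
  · -- lower bound
    set s := Real.sqrt (y ^ 2 + 2) with hs_def
    have hpos : (0:ℝ) < y ^ 2 + 2 := by positivity
    have hs : 0 < s := Real.sqrt_pos.2 hpos
    have hs2 : s ^ 2 = y ^ 2 + 2 := Real.sq_sqrt hpos.le
    have hinv : 1 / (y + s) = (s - y) / 2 := by
      rw [div_eq_div_iff (by positivity) (two_ne_zero)]
      linear_combination (-1 : ℝ) * hs2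
    have hlow := lower_bound hy.le
    have hmul := mul_lt_mul_of_pos_left hlow (Real.exp_pos (y ^ 2))
    have hcancel : Real.exp (y ^ 2) * ((s - y) / 2 * Real.exp (-y ^ 2))
        = (s - y) / 2 := by
      rw [Real.exp_neg]
      field_simp
    rw [hIdef, hinv]
    calc (s - y) / 2 = Real.exp (y ^ 2) * ((s - y) / 2 * Real.exp (-y ^ 2)) :=
          hcancel.symm
      _ < Real.exp (y ^ 2) * I y := hmul
  · -- upper bound
    set s := Real.sqrt (y ^ 2 + 4 / π) with hs_def
    have hbp : (0:ℝ) < 4 / π := b_pos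
    have hpos : (0:ℝ) < y ^ 2 + 4 / π := by positivity
    have hs : 0 < s := Real.sqrt_pos.2 hpos
    have hs2 : s ^ 2 = y ^ 2 + 4 / π := Real.sq_sqrt hpos.le
    have hπs2 : π * s ^ 2 = π * y ^ 2 + 4 := by
      rw [hs2, mul_add, mul_div_cancel₀ _ Real.pi_ne_zero]
    have hys : (0:ℝ) < y + s := by linarith
    have hinv : 1 / (y + s) = π / 4 * (s - y) := by
      rw [div_eq_iff (ne_of_gt hys)]
      linear_combination (-1/4 : ℝ) * hπs2
    have hup := upper_bound hy.le
    have hmul := mul_le_mul_of_nonneg_left hup (Real.exp_pos (y ^ 2)).le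
    have hcancel : Real.exp (y ^ 2) * (π / 4 * ((s - y) * Real.exp (-y ^ 2)))
        = π / 4 * (s - y) := by
      rw [Real.exp_neg]
      field_simp
    rw [hIdef, hinv]
    calc Real.exp (y ^ 2) * I y
        ≤ Real.exp (y ^ 2) * (π / 4 * ((s - y) * Real.exp (-y ^ 2))) := hmul
      _ = π / 4 * (s - y) := hcancel
end

section
/- For every even integer m ≥ 0 and every x > 0, e^{x²}∫_x^∞ e^{-t²} dt < Σ_{k=0}^m (−1)^k x^{−(2k+1)}·(1/2)·(1/2)_k; and for every odd m ≥ 1 and every x > 0, e^{x²}∫_x^∞ e^{-t²} dt > Σ_{k=0}^m (−1)^k x^{−(2k+1)}·(1/2)·(1/2)_k. -/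
/-! Writing `a_k(x)` for the `k`-th term of the series, one has `a_k' = 2x a_{k+1}`, hence
`(e^{-x²} a_k)' = 2x e^{-x²} (a_{k+1} - a_k)`, and the derivative of `e^{-x²} ∑_{k ≤ m} a_k`
telescopes to `(-1)^{m+1} (1/2)_{m+1} e^{-x²} / x^{2m+2} - e^{-x²}`. Integrating over `(x, ∞)`
gives the exact remainder
`∑_{k ≤ m} a_k(x) - e^{x²} ∫_x^∞ e^{-t²} dt = (-1)^m (1/2)_{m+1} e^{x²} ∫_x^∞ e^{-t²} / t^{2m+2} dt`,
whose sign is that of `(-1)^m`. -/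

open MeasureTheory Real Finset

/-- Pochhammer symbol `(a)_n = a(a+1)⋯(a+n−1)`. -/
noncomputable def poch (a : ℝ) (n : ℕ) : ℝ := ∏ i ∈ Finset.range n, (a + i)

/-- The scaled Gaussian tail `g(x) = e^{x²} ∫_x^∞ e^{-t²} dt`. -/
noncomputable def gTail (x : ℝ) : ℝ :=
  Real.exp (x ^ 2) * ∫ t in Set.Ioi x, Real.exp (-t ^ 2)

open Filter Set Topology

noncomputable def gTailSeriesTerm (k : ℕ) (x : ℝ) : ℝ :=
  (-1 : ℝ) ^ k * (x ^ (2 * k + 1))⁻¹ * (1 / 2) * poch (1 / 2) k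

lemma poch_zero (a : ℝ) : poch a 0 = 1 :=
  prod_range_zero _

lemma poch_succ (a : ℝ) (n : ℕ) : poch a (n + 1) = poch a n * (a + n) :=
  prod_range_succ _ _

lemma poch_pos {a : ℝ} (ha : 0 < a) (n : ℕ) : 0 < poch a n :=
  prod_pos fun _ _ => by positivity

lemma two_mul_mul_gTailSeriesTerm (k : ℕ) {x : ℝ} (hx : x ≠ 0) :
    2 * x * gTailSeriesTerm k x = (-1) ^ k * poch (1 / 2) k / x ^ (2 * k) := by
  unfold gTailSeriesTerm
  field_simp
  ring

lemma hasDerivAt_gTailSeriesTerm (k : ℕ) {x : ℝ} (hx : x ≠ 0) :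
    HasDerivAt (gTailSeriesTerm k) (2 * x * gTailSeriesTerm (k + 1) x) x := by
  have h := (((hasDerivAt_pow (2 * k + 1) x).inv (pow_ne_zero _ hx)).const_mul
    ((-1 : ℝ) ^ k)).mul_const (1 / 2) |>.mul_const (poch (1 / 2) k)
  refine h.congr_deriv ?_
  rw [two_mul_mul_gTailSeriesTerm _ hx, poch_succ]
  field_simp
  push_cast
  ring

lemma hasDerivAt_exp_neg_sq_mul_sum_gTailSeriesTerm (m : ℕ) {x : ℝ} (hx : x ≠ 0) :
    HasDerivAt (fun y => exp (-y ^ 2) * ∑ k ∈ range (m + 1), gTailSeriesTerm k y)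
      ((-1) ^ (m + 1) * poch (1 / 2) (m + 1) * (exp (-x ^ 2) / x ^ (2 * m + 2)) - exp (-x ^ 2))
      x := by
  have hexp : HasDerivAt (fun y => exp (-y ^ 2)) (exp (-x ^ 2) * -(2 * x)) x := by
    simpa using ((hasDerivAt_pow 2 x).neg).exp
  have hsum := HasDerivAt.fun_sum (u := range (m + 1)) fun k _ => hasDerivAt_gTailSeriesTerm k hx
  refine (hexp.mul hsum).congr_deriv ?_
  have htel : ∑ k ∈ range (m + 1), 2 * x * gTailSeriesTerm (k + 1) x -
      2 * x * ∑ k ∈ range (m + 1), gTailSeriesTerm k x =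
      2 * x * gTailSeriesTerm (m + 1) x - 2 * x * gTailSeriesTerm 0 x := by
    rw [← mul_sum, ← mul_sub, ← sum_sub_distrib, sum_range_sub (gTailSeriesTerm · x), mul_sub]
  rw [two_mul_mul_gTailSeriesTerm _ hx, two_mul_mul_gTailSeriesTerm _ hx] at htel
  simp only [poch_zero, pow_zero, mul_zero, div_one, one_mul] at htel
  linear_combination exp (-x ^ 2) * htel

lemma integrable_exp_neg_sq : Integrable fun t : ℝ => exp (-t ^ 2) := by
  simpa using integrable_exp_neg_mul_sq one_pos

lemma integrableOn_exp_neg_sq_div_pow_Ioi (n : ℕ) {x : ℝ} (hx : 0 < x) :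
    IntegrableOn (fun t => exp (-t ^ 2) / t ^ n) (Ioi x) := by
  refine (integrable_exp_neg_sq.const_mul (x ^ n)⁻¹).integrableOn.mono' ?_ ?_
  · exact (ContinuousOn.div (by fun_prop) (by fun_prop) fun t ht =>
      pow_ne_zero _ (hx.trans ht).ne').aestronglyMeasurable measurableSet_Ioi
  · filter_upwards [ae_restrict_mem measurableSet_Ioi] with t ht
    have ht0 : 0 < t := hx.trans ht
    rw [norm_of_nonneg (by positivity), div_eq_inv_mul]
    gcongr
    exact ht.le

lemma integral_exp_neg_sq_div_pow_Ioi_pos (n : ℕ) {x : ℝ} (hx : 0 < x) :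
    0 < ∫ t in Ioi x, exp (-t ^ 2) / t ^ n := by
  have hpos : ∀ t ∈ Ioi x, 0 < exp (-t ^ 2) / t ^ n := fun t ht => by
    have : 0 < t := hx.trans ht
    positivity
  rw [setIntegral_pos_iff_support_of_nonneg_ae _ (integrableOn_exp_neg_sq_div_pow_Ioi n hx),
    inter_eq_right.2 fun t ht => Function.mem_support.2 (hpos t ht).ne']
  · simp
  · filter_upwards [ae_restrict_mem measurableSet_Ioi] with t ht using (hpos t ht).le

lemma tendsto_exp_neg_sq_mul_sum_gTailSeriesTerm (m : ℕ) :
    Tendsto (fun y => exp (-y ^ 2) * ∑ k ∈ range (m + 1), gTailSeriesTerm k y) atTop (𝓝 0) := by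
  have hexp : Tendsto (fun y : ℝ => exp (-y ^ 2)) atTop (𝓝 0) :=
    tendsto_exp_neg_atTop_nhds_zero.comp (tendsto_pow_atTop two_ne_zero)
  have hterm (k : ℕ) : Tendsto (gTailSeriesTerm k) atTop (𝓝 0) := by
    have := ((tendsto_inv_atTop_zero.comp (tendsto_pow_atTop (Nat.succ_ne_zero (2 * k)))).const_mul
      ((-1 : ℝ) ^ k)).mul_const (1 / 2) |>.mul_const (poch (1 / 2) k)
    rwa [mul_zero, zero_mul, zero_mul] at this
  simpa using hexp.mul (tendsto_finsetSum _ fun k _ => hterm k)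

theorem sum_gTailSeriesTerm_sub_gTail (m : ℕ) {x : ℝ} (hx : 0 < x) :
    ∑ k ∈ range (m + 1), gTailSeriesTerm k x - gTail x =
      (-1) ^ m * (poch (1 / 2) (m + 1) * exp (x ^ 2) *
        ∫ t in Ioi x, exp (-t ^ 2) / t ^ (2 * m + 2)) := by
  have hftc := integral_Ioi_of_hasDerivAt_of_tendsto'
    (fun t ht => hasDerivAt_exp_neg_sq_mul_sum_gTailSeriesTerm m (hx.trans_le ht).ne')
    (((integrableOn_exp_neg_sq_div_pow_Ioi _ hx).const_mul _).sub integrable_exp_neg_sq.integrableOn)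
    (tendsto_exp_neg_sq_mul_sum_gTailSeriesTerm m)
  rw [integral_sub ((integrableOn_exp_neg_sq_div_pow_Ioi _ hx).const_mul _)
    integrable_exp_neg_sq.integrableOn, integral_const_mul] at hftc
  have hexp : exp (x ^ 2) * exp (-x ^ 2) = 1 := by rw [← exp_add, add_neg_cancel, exp_zero]
  rw [gTail]
  linear_combination exp (x ^ 2) * hftc - (∑ k ∈ range (m + 1), gTailSeriesTerm k x) * hexp

theorem gaussian_tail_asymptotic_alternating :
    (∀ m : ℕ, Even m → ∀ x : ℝ, 0 < x →
      gTail x < ∑ k ∈ Finset.range (m + 1),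
        (-1 : ℝ) ^ k * (x ^ (2 * k + 1))⁻¹ * (1 / 2) * poch (1 / 2) k) ∧
    (∀ m : ℕ, Odd m → ∀ x : ℝ, 0 < x →
      gTail x > ∑ k ∈ Finset.range (m + 1),
        (-1 : ℝ) ^ k * (x ^ (2 * k + 1))⁻¹ * (1 / 2) * poch (1 / 2) k) := by
  have hremainder_pos (m : ℕ) {x : ℝ} (hx : 0 < x) : 0 < poch (1 / 2) (m + 1) * exp (x ^ 2) *
      ∫ t in Ioi x, exp (-t ^ 2) / t ^ (2 * m + 2) :=
    mul_pos (mul_pos (poch_pos one_half_pos _) (exp_pos _))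
      (integral_exp_neg_sq_div_pow_Ioi_pos _ hx)
  refine ⟨fun m hm x hx => ?_, fun m hm x hx => ?_⟩ <;>
    have h := sum_gTailSeriesTerm_sub_gTail m hx <;> unfold gTailSeriesTerm at h
  · rw [hm.neg_one_pow, one_mul] at h
    linarith [hremainder_pos m hx]
  · rw [hm.neg_one_pow, neg_one_mul] at h
    linarith [hremainder_pos m hx]
end

section
/- Let φ: ℝ → [0,1] be smooth with φ(x)=1 for |x|≤1 and φ(x)=0 for |x|≥2, and let a ∼ N(0, I_n) be a standard Gaussian vector in ℝⁿ. Then there exist ε > 0 and N > 0 such that for every unit vector ξ ∈ ℝⁿ, E[ (a·ξ)²(a·e₁)²/(ε+(a·e₁)²) · φ((a·ξ)/N) ] ≥ 0.99. -/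
open MeasureTheory ProbabilityTheory Finset Real Filter
open scoped ENNReal NNReal Topology

noncomputable def gpdf (x : ℝ) : ℝ := (Real.sqrt (2 * π))⁻¹ * Real.exp (-x ^ 2 / 2)


lemma gpdf_eq : gpdf = gaussianPDFReal 0 1 := by
  ext x
  simp [gpdf, gaussianPDFReal]

lemma gpdf_pos (x : ℝ) : 0 < gpdf x := by
  rw [gpdf_eq]; exact gaussianPDFReal_pos _ _ _ one_ne_zero

lemma gpdf_meas : Measurable gpdf := by
  rw [gpdf_eq]; exact measurable_gaussianPDFReal 0 1

lemma gauss_eq_wd : gaussianReal 0 1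
    = volume.withDensity (fun x => ((Real.toNNReal (gpdf x) : ℝ≥0) : ℝ≥0∞)) := by
  rw [gaussianReal_of_var_ne_zero 0 one_ne_zero]
  congr 1
  ext x
  rw [gaussianPDF, gpdf_eq]
  rfl

lemma gauss_integral (g : ℝ → ℝ) :
    ∫ x, g x ∂(gaussianReal 0 1) = ∫ x, gpdf x * g x := by
  rw [gauss_eq_wd, integral_withDensity_eq_integral_smul (gpdf_meas.real_toNNReal)]
  congr 1; ext x
  simp [NNReal.smul_def, Real.coe_toNNReal _ (gpdf_pos x).le]

lemma gauss_integrable {g : ℝ → ℝ} (h : Integrable (fun x => gpdf x * g x) volume) :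
    Integrable g (gaussianReal 0 1) := by
  rw [gauss_eq_wd, integrable_withDensity_iff_integrable_smul (gpdf_meas.real_toNNReal)]
  apply h.congr
  filter_upwards with x
  simp [NNReal.smul_def, Real.coe_toNNReal _ (gpdf_pos x).le]

lemma gpdf_integral_one : ∫ x, gpdf x = 1 := by
  rw [gpdf_eq]; exact integral_gaussianPDFReal_eq_one 0 one_ne_zero

lemma gpdf_integrable : Integrable gpdf := by
  rw [gpdf_eq]; exact integrable_gaussianPDFReal 0 1



-- exponential moments
lemma gpdf_mul_exp (c x : ℝ) :
    gpdf x * Real.exp (c * x) = Real.exp (c ^ 2 / 2) * gpdf (x - c) := by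
  have h : Real.exp (-x ^ 2 / 2) * Real.exp (c * x)
      = Real.exp (c ^ 2 / 2) * Real.exp (-(x - c) ^ 2 / 2) := by
    rw [← Real.exp_add, ← Real.exp_add]; congr 1; ring
  simp only [gpdf]
  linear_combination (Real.sqrt (2 * π))⁻¹ * h

lemma integrable_gpdf_exp (c : ℝ) :
    Integrable (fun x => gpdf x * Real.exp (c * x)) := by
  simp_rw [gpdf_mul_exp]
  exact (gpdf_integrable.comp_sub_right c).const_mul _

lemma integral_gpdf_exp (c : ℝ) :
    ∫ x, gpdf x * Real.exp (c * x) = Real.exp (c ^ 2 / 2) := by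
  simp_rw [gpdf_mul_exp]
  rw [integral_const_mul, integral_sub_right_eq_self gpdf c, gpdf_integral_one, mul_one]

lemma gauss_exp_integrable (c : ℝ) :
    Integrable (fun x => Real.exp (c * x)) (gaussianReal 0 1) :=
  gauss_integrable (integrable_gpdf_exp c)

lemma gauss_exp_integral (c : ℝ) :
    ∫ x, Real.exp (c * x) ∂(gaussianReal 0 1) = Real.exp (c ^ 2 / 2) := by
  rw [gauss_integral]; exact integral_gpdf_exp c

-- first moment
lemma integrable_gpdf_id : Integrable (fun x => gpdf x * x) := by
  apply ((integrable_mul_exp_neg_mul_sq (one_half_pos)).const_mul ((Real.sqrt (2*π))⁻¹)).congr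
  filter_upwards with x
  simp only [gpdf]
  rw [show -(1/2 : ℝ) * x ^ 2 = -x^2/2 by ring]
  ring

lemma integral_gpdf_id : ∫ x, gpdf x * x = 0 := by
  have h := integral_neg_eq_self (fun x => gpdf x * x) (volume : Measure ℝ)
  have h2 : ∀ x : ℝ, gpdf (-x) * (-x) = -(gpdf x * x) := by
    intro x; simp only [gpdf, neg_sq]; ring
  simp only [h2, integral_neg] at h
  linarith

-- second moment
lemma integrable_sq_exp : Integrable (fun x : ℝ => x ^ 2 * Real.exp (-x ^ 2 / 2)) := by
  apply (integrable_rpow_mul_exp_neg_mul_sq (one_half_pos) (s := 2) (by norm_num)).congr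
  filter_upwards with x
  rw [show ((2:ℝ)) = ((2:ℕ):ℝ) by norm_num, Real.rpow_natCast]
  norm_num
  left
  ring

lemma integrable_exp_sq : Integrable (fun x : ℝ => Real.exp (-x ^ 2 / 2)) := by
  apply (integrable_exp_neg_mul_sq (one_half_pos)).congr
  filter_upwards with x
  rw [show -(1/2 : ℝ) * x ^ 2 = -x^2/2 by ring]

lemma integrable_gpdf_sq : Integrable (fun x => gpdf x * x ^ 2) := by
  apply (integrable_sq_exp.const_mul ((Real.sqrt (2*π))⁻¹)).congr
  filter_upwards with x
  simp only [gpdf]; ring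

lemma integral_aux_Ioi : ∫ x in Set.Ioi (0:ℝ), (x ^ 2 - 1) * Real.exp (-x ^ 2 / 2) = 0 := by
  have hderiv : ∀ x ∈ Set.Ici (0:ℝ), HasDerivAt (fun x : ℝ => -x * Real.exp (-x ^ 2 / 2))
      ((x ^ 2 - 1) * Real.exp (-x ^ 2 / 2)) x := by
    intro x _
    have h1 : HasDerivAt (fun x : ℝ => -x ^ 2 / 2) (-x) x := by
      have := (hasDerivAt_pow 2 x).neg.div_const 2
      simpa using this.congr_deriv (by push_cast; ring)
    have h2 := h1.exp
    have h3 := ((hasDerivAt_id x).neg.mul h2)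
    refine h3.congr_deriv ?_
    simp only [Pi.neg_apply, id_eq]
    ring
  have hint : Integrable (fun x : ℝ => (x ^ 2 - 1) * Real.exp (-x ^ 2 / 2)) := by
    apply (integrable_sq_exp.sub integrable_exp_sq).congr
    filter_upwards with x
    simp only [Pi.sub_apply]; ring
  have htend : Tendsto (fun x : ℝ => -x * Real.exp (-x ^ 2 / 2)) atTop (𝓝 0) := by
    have hlo := rpow_mul_exp_neg_mul_sq_isLittleO_exp_neg one_half_pos 1
    have hin : Tendsto (fun x : ℝ => -(1/2 : ℝ) * x) atTop atBot := by
      apply Tendsto.const_mul_atTop_of_neg (by norm_num : -(1/2 : ℝ) < 0) tendsto_id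
    have hexp : Tendsto (fun x : ℝ => Real.exp (-(1/2 : ℝ) * x)) atTop (𝓝 0) :=
      Real.tendsto_exp_atBot.comp hin
    have h0 : Tendsto (fun x : ℝ => x ^ (1:ℝ) * Real.exp (-(1/2) * x ^ 2)) atTop (𝓝 0) :=
      hlo.isBigO.trans_tendsto hexp
    have h1 : Tendsto (fun x : ℝ => x * Real.exp (-x ^ 2 / 2)) atTop (𝓝 0) := by
      apply h0.congr
      intro x
      rw [Real.rpow_one, show -(1/2 : ℝ) * x ^ 2 = -x^2/2 by ring]
    simpa using h1.neg
  have := integral_Ioi_of_hasDerivAt_of_tendsto' hderiv hint.integrableOn htend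
  simpa using this

lemma integral_aux_real : ∫ x : ℝ, (x ^ 2 - 1) * Real.exp (-x ^ 2 / 2) = 0 := by
  have hint : Integrable (fun x : ℝ => (x ^ 2 - 1) * Real.exp (-x ^ 2 / 2)) := by
    apply (integrable_sq_exp.sub integrable_exp_sq).congr
    filter_upwards with x
    simp only [Pi.sub_apply]; ring
  have hsplit := integral_add_compl (measurableSet_Ioi (a := (0:ℝ))) hint
  have hIic : ∫ x in Set.Iic (0:ℝ), (x ^ 2 - 1) * Real.exp (-x ^ 2 / 2) = 0 := by
    have hc := integral_comp_neg_Ioi (0:ℝ) (fun x => (x ^ 2 - 1) * Real.exp (-x ^ 2 / 2))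
    simp only [neg_zero, neg_sq] at hc
    rw [← hc]
    exact integral_aux_Ioi
  rw [Set.compl_Ioi] at hsplit
  rw [← hsplit, integral_aux_Ioi, hIic]
  norm_num

lemma integral_gpdf_sq : ∫ x, gpdf x * x ^ 2 = 1 := by
  have h : ∫ x, (gpdf x * x ^ 2 - gpdf x) = 0 := by
    have : ∀ x, gpdf x * x ^ 2 - gpdf x
        = (Real.sqrt (2*π))⁻¹ * ((x ^ 2 - 1) * Real.exp (-x ^ 2 / 2)) := by
      intro x; simp only [gpdf]; ring
    simp_rw [this]
    rw [integral_const_mul, integral_aux_real, mul_zero]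
  rw [integral_sub integrable_gpdf_sq gpdf_integrable, gpdf_integral_one] at h
  linarith

lemma gauss_sq_integrable : Integrable (fun x : ℝ => x ^ 2) (gaussianReal 0 1) :=
  gauss_integrable integrable_gpdf_sq

lemma gauss_sq_integral : ∫ x, x ^ 2 ∂(gaussianReal 0 1) = 1 := by
  rw [gauss_integral]; exact integral_gpdf_sq

lemma gauss_id_integrable : Integrable (fun x : ℝ => x) (gaussianReal 0 1) :=
  gauss_integrable integrable_gpdf_id

lemma gauss_id_integral : ∫ x, x ∂(gaussianReal 0 1) = 0 := by
  rw [gauss_integral]; exact integral_gpdf_id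

-- small interval
lemma gauss_ind_integrable (δ : ℝ) :
    Integrable (fun x => if |x| < δ then (1:ℝ) else 0) (gaussianReal 0 1) := by
  apply gauss_integrable
  apply gpdf_integrable.mono'
  · exact (gpdf_meas.mul ((measurable_const.ite
      (measurableSet_lt measurable_abs measurable_const) measurable_const))).aestronglyMeasurable
  · filter_upwards with x
    have := gpdf_pos x
    rw [Real.norm_eq_abs, abs_mul]
    rcases lt_or_ge |x| δ with h | h
    · simp [if_pos h, abs_of_pos this]
    · simp [if_neg (not_lt.2 h), this.le]

lemma gauss_ind_integral {δ : ℝ} (hδ : 0 < δ) :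
    ∫ x, (if |x| < δ then (1:ℝ) else 0) ∂(gaussianReal 0 1) ≤ δ := by
  rw [gauss_integral]
  have hindint : Integrable
      (Set.indicator (Set.Ioo (-δ) δ) (fun _ => (Real.sqrt (2*π))⁻¹)) := by
    apply IntegrableOn.integrable_indicator _ measurableSet_Ioo
    exact integrableOn_const measure_Ioo_lt_top.ne
  have hlint : Integrable (fun x => gpdf x * if |x| < δ then (1:ℝ) else 0) := by
    apply gpdf_integrable.mono'
    · exact (gpdf_meas.mul ((measurable_const.ite
        (measurableSet_lt measurable_abs measurable_const) measurable_const))).aestronglyMeasurable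
    · filter_upwards with x
      have := gpdf_pos x
      rw [Real.norm_eq_abs, abs_mul]
      rcases lt_or_ge |x| δ with h | h
      · simp [if_pos h, abs_of_pos this]
      · simp [if_neg (not_lt.2 h), this.le]
  have hmono : ∀ x, gpdf x * (if |x| < δ then (1:ℝ) else 0)
      ≤ Set.indicator (Set.Ioo (-δ) δ) (fun _ => (Real.sqrt (2*π))⁻¹) x := by
    intro x
    rcases lt_or_ge |x| δ with h | h
    · rw [if_pos h, Set.indicator_of_mem (by constructor <;> [linarith [neg_abs_le x]; linarith [le_abs_self x]])]
      rw [mul_one]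
      simp only [gpdf]
      have h1 : Real.exp (-x ^ 2 / 2) ≤ 1 := by
        rw [Real.exp_le_one_iff]
        nlinarith [sq_nonneg x]
      nlinarith [Real.sqrt_nonneg (2*π), inv_nonneg.2 (Real.sqrt_nonneg (2*π)), h1]
    · rw [if_neg (not_lt.2 h), mul_zero]
      apply Set.indicator_nonneg
      intro y _; positivity
  calc ∫ x, gpdf x * (if |x| < δ then (1:ℝ) else 0)
      ≤ ∫ x, Set.indicator (Set.Ioo (-δ) δ) (fun _ => (Real.sqrt (2*π))⁻¹) x :=
        integral_mono hlint hindint hmono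
    _ = (volume (Set.Ioo (-δ) δ)).toReal • (Real.sqrt (2*π))⁻¹ :=
        integral_indicator_const _ measurableSet_Ioo
    _ ≤ δ := by
        rw [Real.volume_Ioo, smul_eq_mul]
        rw [ENNReal.toReal_ofReal (by linarith)]
        have h2 : (2:ℝ) ≤ Real.sqrt (2*π) := by
          nlinarith [Real.sq_sqrt (by positivity : (0:ℝ) ≤ 2*π),
            Real.sqrt_nonneg (2*π), Real.pi_gt_three]
        have h3 : (0:ℝ) < Real.sqrt (2*π) := by linarith
        nlinarith [mul_inv_cancel₀ (ne_of_gt h3), inv_nonneg.2 h3.le, hδ]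



variable {μ : Measure ℝ} [IsProbabilityMeasure μ]

lemma pi_integrable_prod : ∀ {n : ℕ} {f : Fin n → ℝ → ℝ},
    (∀ i, Integrable (f i) μ) →
    Integrable (fun x : Fin n → ℝ => ∏ i, f i (x i)) (Measure.pi fun _ => μ) := by
  intro n
  induction n with
  | zero =>
      intro f _
      simp only [Finset.univ_eq_empty, Finset.prod_empty]
      exact integrable_const 1
  | succ n ih =>
      intro f hf
      have h := ((measurePreserving_piFinSuccAbove
        (fun _ : Fin (n+1) => μ) 0).symm)
      rw [← h.integrable_comp_emb (MeasurableEquiv.measurableEmbedding _)]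
      simp_rw [MeasurableEquiv.piFinSuccAbove_symm_apply, Fin.insertNthEquiv,
        Fin.prod_univ_succ, Fin.insertNth_zero]
      simp only [Fin.zero_succAbove, Function.comp_def, Equiv.coe_fn_mk,
        Fin.cons_zero, Fin.cons_succ]
      exact Integrable.mul_prod (hf 0) (ih fun i => hf _)

lemma pi_integral_prod : ∀ {n : ℕ} (f : Fin n → ℝ → ℝ),
    ∫ x : Fin n → ℝ, ∏ i, f i (x i) ∂(Measure.pi fun _ => μ) = ∏ i, ∫ x, f i x ∂μ := by
  intro n
  induction n with
  | zero =>
      intro f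
      simp
  | succ n ih =>
      intro f
      calc
        _ = ∫ x : ℝ × (Fin n → ℝ),
            f 0 x.1 * ∏ i : Fin n, f i.succ (x.2 i) ∂(μ.prod (Measure.pi fun _ => μ)) := by
          rw [← ((measurePreserving_piFinSuccAbove
            (fun _ : Fin (n+1) => μ) 0).symm).integral_comp']
          apply integral_congr_ae
          filter_upwards with x
          simp only [MeasurableEquiv.piFinSuccAbove_symm_apply, Fin.insertNthEquiv,
            Fin.prod_univ_succ, Fin.insertNth_zero, Equiv.coe_fn_mk,
            Fin.zero_succAbove, Fin.cons_zero, Fin.cons_succ, cast_eq]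
        _ = (∫ x, f 0 x ∂μ) * ∏ i : Fin n, ∫ x, f i.succ x ∂μ := by
          rw [← ih, ← integral_prod_mul]
        _ = ∏ i, ∫ x, f i x ∂μ := by rw [Fin.prod_univ_succ]

section coord

variable {n : ℕ}

lemma coord_eq_prod (g : ℝ → ℝ) (i : Fin n) (a : Fin n → ℝ) :
    g (a i) = ∏ k, (fun k => fun x => if k = i then g x else 1) k (a k) := by
  rw [Finset.prod_ite_eq' Finset.univ i (fun k => g (a k))]
  simp

lemma pi_integrable_coord {g : ℝ → ℝ} (hg : Integrable g μ) (i : Fin n) :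
    Integrable (fun a : Fin n → ℝ => g (a i)) (Measure.pi fun _ => μ) := by
  have := pi_integrable_prod (μ := μ)
    (f := fun k => fun x => if k = i then g x else 1) (fun k => by
      by_cases h : k = i
      · simpa [h] using hg
      · simpa [h] using integrable_const (μ := μ) (1:ℝ))
  apply this.congr
  filter_upwards with a
  exact (coord_eq_prod g i a).symm

lemma pi_integral_coord (g : ℝ → ℝ) (i : Fin n) :
    ∫ a : Fin n → ℝ, g (a i) ∂(Measure.pi fun _ => μ) = ∫ x, g x ∂μ := by
  have h1 : (fun a : Fin n → ℝ => g (a i))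
      = fun a => ∏ k, (fun k => fun x => if k = i then g x else 1) k (a k) := by
    funext a; exact coord_eq_prod g i a
  rw [h1, pi_integral_prod (fun k => fun x : ℝ => if k = i then g x else 1)]
  have h2 : ∀ k : Fin n, ∫ x, (if k = i then g x else 1) ∂μ
      = if k = i then ∫ x, g x ∂μ else 1 := by
    intro k
    by_cases h : k = i <;> simp [h]
  calc ∏ k, ∫ x, (fun k => fun x => if k = i then g x else 1) k x ∂μ
      = ∏ k, (if k = i then ∫ x, g x ∂μ else 1) := Finset.prod_congr rfl (fun k _ => h2 k)
    _ = ∫ x, g x ∂μ := by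
        rw [Finset.prod_ite_eq' Finset.univ i (fun _ => ∫ x, g x ∂μ)]
        simp

lemma pair_eq_prod (i j : Fin n) (hij : i ≠ j) (a : Fin n → ℝ) :
    a i * a j = ∏ k, (fun k => fun x : ℝ => if k = i ∨ k = j then x else 1) k (a k) := by
  rw [← Finset.prod_subset (Finset.subset_univ ({i, j} : Finset (Fin n)))
    (fun k _ hk => by
      simp only [Finset.mem_insert, Finset.mem_singleton] at hk
      push_neg at hk
      simp [hk.1, hk.2])]
  rw [Finset.prod_pair hij]
  simp

lemma pi_integrable_pair (hid : Integrable (fun x : ℝ => x) μ) (i j : Fin n) (hij : i ≠ j) :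
    Integrable (fun a : Fin n → ℝ => a i * a j) (Measure.pi fun _ => μ) := by
  have := pi_integrable_prod (μ := μ)
    (f := fun k => fun x : ℝ => if k = i ∨ k = j then x else 1) (fun k => by
      by_cases h : k = i ∨ k = j
      · simpa [h] using hid
      · simpa [h] using integrable_const (μ := μ) (1:ℝ))
  apply this.congr
  filter_upwards with a
  exact (pair_eq_prod i j hij a).symm

lemma pi_integral_pair (i j : Fin n) (hij : i ≠ j) :
    ∫ a : Fin n → ℝ, a i * a j ∂(Measure.pi fun _ => μ)
      = (∫ x, x ∂μ) * (∫ x, x ∂μ) := by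
  have h1 : (fun a : Fin n → ℝ => a i * a j)
      = fun a => ∏ k, (fun k => fun x : ℝ => if k = i ∨ k = j then x else 1) k (a k) := by
    funext a; exact pair_eq_prod i j hij a
  rw [h1, pi_integral_prod (fun k => fun x : ℝ => if k = i ∨ k = j then x else 1)]
  have h2 : ∀ k : Fin n, ∫ x, (if k = i ∨ k = j then x else 1) ∂μ
      = if k = i ∨ k = j then ∫ x, x ∂μ else 1 := by
    intro k
    by_cases h : k = i ∨ k = j <;> simp [h]
  calc ∏ k, ∫ x, (fun k => fun x : ℝ => if k = i ∨ k = j then x else 1) k x ∂μ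
      = ∏ k, (if k = i ∨ k = j then ∫ x, x ∂μ else 1) :=
        Finset.prod_congr rfl (fun k _ => h2 k)
    _ = ∏ k ∈ ({i, j} : Finset (Fin n)), (if k = i ∨ k = j then ∫ x, x ∂μ else 1) := by
        rw [Finset.prod_subset (Finset.subset_univ ({i, j} : Finset (Fin n)))
          (fun k _ hk => by
            simp only [Finset.mem_insert, Finset.mem_singleton] at hk
            push_neg at hk
            simp [hk.1, hk.2])]
    _ = (∫ x, x ∂μ) * (∫ x, x ∂μ) := by
        rw [Finset.prod_pair hij]
        simp

end coord



-- === S-level lemmas ===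
section Slevel

variable {n : ℕ} (ξ : Fin n → ℝ)

lemma exp_sum_eq (t : ℝ) (a : Fin n → ℝ) :
    Real.exp (t * ∑ i, a i * ξ i) = ∏ i, Real.exp ((t * ξ i) * a i) := by
  rw [← Real.exp_sum]
  congr 1
  rw [Finset.mul_sum]
  exact Finset.sum_congr rfl fun i _ => by ring

lemma integrable_expS (t : ℝ) :
    Integrable (fun a : Fin n → ℝ => Real.exp (t * ∑ i, a i * ξ i))
      (Measure.pi fun _ => gaussianReal 0 1) := by
  have h := pi_integrable_prod (μ := gaussianReal 0 1)
    (f := fun i => fun x : ℝ => Real.exp ((t * ξ i) * x))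
    (fun i => gauss_exp_integrable _)
  apply h.congr
  filter_upwards with a
  exact (exp_sum_eq ξ t a).symm

lemma integral_expS (t : ℝ) (hξ : ∑ i, ξ i ^ 2 = 1) :
    ∫ a : Fin n → ℝ, Real.exp (t * ∑ i, a i * ξ i) ∂(Measure.pi fun _ => gaussianReal 0 1)
      = Real.exp (t ^ 2 / 2) := by
  have h : (fun a : Fin n → ℝ => Real.exp (t * ∑ i, a i * ξ i))
      = fun a => ∏ i, (fun i => fun x : ℝ => Real.exp ((t * ξ i) * x)) i (a i) :=
    funext (exp_sum_eq ξ t)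
  rw [h, pi_integral_prod (fun i => fun x : ℝ => Real.exp ((t * ξ i) * x))]
  calc ∏ i, ∫ x, Real.exp ((t * ξ i) * x) ∂(gaussianReal 0 1)
      = ∏ i, Real.exp ((t * ξ i) ^ 2 / 2) :=
        Finset.prod_congr rfl fun i _ => gauss_exp_integral _
    _ = Real.exp (∑ i, (t * ξ i) ^ 2 / 2) := (Real.exp_sum _ _).symm
    _ = Real.exp (t ^ 2 / 2) := by
        congr 1
        have : ∀ i ∈ Finset.univ, (t * ξ i) ^ 2 / 2 = t ^ 2 / 2 * ξ i ^ 2 :=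
          fun i _ => by ring
        rw [Finset.sum_congr rfl this, ← Finset.mul_sum, hξ, mul_one]

lemma expand_S2 (a : Fin n → ℝ) :
    (∑ i, a i * ξ i) ^ 2 = ∑ i, ∑ j, (ξ i * ξ j) * (a i * a j) := by
  rw [sq, Finset.sum_mul_sum]
  exact Finset.sum_congr rfl fun i _ => Finset.sum_congr rfl fun j _ => by ring

lemma integrable_term (i j : Fin n) :
    Integrable (fun a : Fin n → ℝ => (ξ i * ξ j) * (a i * a j))
      (Measure.pi fun _ => gaussianReal 0 1) := by
  by_cases hij : i = j
  · subst hij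
    have h := (pi_integrable_coord (μ := gaussianReal 0 1)
      gauss_sq_integrable i (n := n)).const_mul (ξ i * ξ i)
    apply h.congr
    filter_upwards with a
    rw [sq]
  · exact (pi_integrable_pair gauss_id_integrable i j hij).const_mul _

lemma integrable_S2 :
    Integrable (fun a : Fin n → ℝ => (∑ i, a i * ξ i) ^ 2)
      (Measure.pi fun _ => gaussianReal 0 1) := by
  have h : (fun a : Fin n → ℝ => (∑ i, a i * ξ i) ^ 2)
      = fun a => ∑ i, ∑ j, (ξ i * ξ j) * (a i * a j) := funext (expand_S2 ξ)
  rw [h]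
  exact integrable_finset_sum _ fun i _ => integrable_finset_sum _ fun j _ =>
    integrable_term ξ i j

lemma integral_S2 (hξ : ∑ i, ξ i ^ 2 = 1) :
    ∫ a : Fin n → ℝ, (∑ i, a i * ξ i) ^ 2 ∂(Measure.pi fun _ => gaussianReal 0 1) = 1 := by
  have h : (fun a : Fin n → ℝ => (∑ i, a i * ξ i) ^ 2)
      = fun a => ∑ i, ∑ j, (ξ i * ξ j) * (a i * a j) := funext (expand_S2 ξ)
  rw [h, integral_finset_sum _ (fun i _ => integrable_finset_sum _ fun j _ =>
    integrable_term ξ i j)]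
  have hterm : ∀ i j : Fin n,
      ∫ a : Fin n → ℝ, (ξ i * ξ j) * (a i * a j) ∂(Measure.pi fun _ => gaussianReal 0 1)
        = if i = j then ξ i ^ 2 else 0 := by
    intro i j
    rw [integral_const_mul]
    by_cases hij : i = j
    · subst hij
      rw [if_pos rfl]
      have h2 : ∫ a : Fin n → ℝ, a i * a i ∂(Measure.pi fun _ => gaussianReal 0 1)
          = ∫ a : Fin n → ℝ, (a i) ^ 2 ∂(Measure.pi fun _ => gaussianReal 0 1) := by
        apply integral_congr_ae
        filter_upwards with a
        rw [sq]
      rw [h2, pi_integral_coord (fun x : ℝ => x ^ 2) i, gauss_sq_integral]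
      ring
    · rw [if_neg hij, pi_integral_pair i j hij, gauss_id_integral]
      ring
  calc ∑ i, ∫ a : Fin n → ℝ, (∑ j, (ξ i * ξ j) * (a i * a j))
          ∂(Measure.pi fun _ => gaussianReal 0 1)
      = ∑ i : Fin n, ∑ j : Fin n, (if i = j then ξ i ^ 2 else 0) := by
        apply Finset.sum_congr rfl
        intro i _
        rw [integral_finset_sum _ (fun j _ => integrable_term ξ i j)]
        exact Finset.sum_congr rfl fun j _ => hterm i j
    _ = ∑ i : Fin n, ξ i ^ 2 := by
        apply Finset.sum_congr rfl
        intro i _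
        rw [Finset.sum_ite_eq Finset.univ i (fun _ => ξ i ^ 2)]
        simp
    _ = 1 := hξ

end Slevel

-- === pointwise inequalities ===

lemma exp_sq_expand (u : ℝ) :
    (Real.exp u + Real.exp (-u)) ^ 2 = Real.exp (2 * u) + Real.exp ((-2) * u) + 2 := by
  have h1 : Real.exp (2 * u) = Real.exp u * Real.exp u := by
    rw [two_mul, Real.exp_add]
  have h2 : Real.exp ((-2) * u) = Real.exp (-u) * Real.exp (-u) := by
    rw [show (-2) * u = -u + -u by ring, Real.exp_add]
  have h3 : Real.exp u * Real.exp (-u) = 1 := by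
    rw [← Real.exp_add]; simp
  nlinarith [h1, h2, h3]

lemma sq_le_729_exp_abs (u : ℝ) : u ^ 2 ≤ 729 * Real.exp |u| := by
  rcases le_or_gt |u| 27 with h | h
  · nlinarith [sq_abs u, abs_nonneg u, Real.one_le_exp (abs_nonneg u)]
  · have h2 := Real.add_one_le_exp (|u| / 3)
    have h3 : (|u| / 3 + 1) ^ 3 ≤ (Real.exp (|u| / 3)) ^ 3 :=
      pow_le_pow_left₀ (by positivity) h2 3
    have h4 : (Real.exp (|u| / 3)) ^ 3 = Real.exp |u| := by
      rw [← Real.exp_nat_mul]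
      congr 1
      push_cast
      ring
    rw [h4] at h3
    nlinarith [sq_abs u, abs_nonneg u, h3, Real.exp_pos |u|]

lemma exp_abs_le_sum (u : ℝ) : Real.exp |u| ≤ Real.exp u + Real.exp (-u) := by
  rcases abs_cases u with ⟨he, _⟩ | ⟨he, _⟩
  · rw [he]; linarith [Real.exp_pos (-u)]
  · rw [he]; linarith [Real.exp_pos u]

lemma tail_bound {u : ℝ} (h : 30 < |u|) :
    u ^ 2 ≤ 729 * Real.exp (-(30:ℝ)) * (Real.exp (2 * u) + Real.exp ((-2) * u)) := by
  have h1 := sq_le_729_exp_abs u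
  have h2 : Real.exp |u| ≤ Real.exp (-(30:ℝ)) * Real.exp (2 * |u|) := by
    rw [← Real.exp_add]
    apply Real.exp_le_exp.2
    linarith
  have h3 : Real.exp (2 * |u|) ≤ Real.exp (2 * u) + Real.exp ((-2) * u) := by
    rcases abs_cases u with ⟨he, _⟩ | ⟨he, _⟩
    · rw [he]; linarith [Real.exp_pos ((-2) * u)]
    · rw [he, show 2 * -u = (-2) * u by ring]; linarith [Real.exp_pos (2 * u)]
  have h5 : (0:ℝ) < Real.exp (-(30:ℝ)) := Real.exp_pos _
  nlinarith [Real.exp_pos (2*|u|)]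

lemma amgm_bound (u : ℝ) :
    729 * (Real.exp u + Real.exp (-u))
      ≤ 531441 / 10 ^ 11 / 2 * (Real.exp (2 * u) + Real.exp ((-2) * u) + 2)
        + 10 ^ 11 / 2 := by
  have hH : (729 * (Real.exp u + Real.exp (-u))) ^ 2
      = 531441 * (Real.exp (2 * u) + Real.exp ((-2) * u) + 2) := by
    have := exp_sq_expand u
    nlinarith [this]
  nlinarith [sq_nonneg ((1 / 10 ^ 11 : ℝ) * (729 * (Real.exp u + Real.exp (-u))) - 1), hH]



set_option maxHeartbeats 1000000 in
theorem expectation_localized_lower_bound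
    (n : ℕ) (hn : 0 < n) (φ : ℝ → ℝ)
    (hφ_smooth : ContDiff ℝ (⊤ : ℕ∞) φ)
    (hφ_range : ∀ x, 0 ≤ φ x ∧ φ x ≤ 1)
    (hφ_one : ∀ x, |x| ≤ 1 → φ x = 1)
    (hφ_zero : ∀ x, 2 ≤ |x| → φ x = 0) :
    ∃ ε > (0 : ℝ), ∃ N > (0 : ℝ),
      ∀ ξ : Fin n → ℝ, (∑ i, ξ i ^ 2) = 1 →
        (0.99 : ℝ) ≤
          ∫ a : Fin n → ℝ,
            (∑ i, a i * ξ i) ^ 2 * (a ⟨0, hn⟩) ^ 2 / (ε + (a ⟨0, hn⟩) ^ 2) *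
              φ ((∑ i, a i * ξ i) / N)
            ∂(Measure.pi fun _ => gaussianReal 0 1) := by
  refine ⟨1/10^64, by norm_num, 30, by norm_num, ?_⟩
  intro ξ hξ
  have hden : ∀ a : Fin n → ℝ, (0:ℝ) < 1/10^64 + (a ⟨0, hn⟩) ^ 2 := fun a => by positivity
  -- integrability facts
  have hS2i := integrable_S2 ξ
  have hE2 := integrable_expS ξ 2
  have hEm2 := integrable_expS ξ (-2)
  have hci := pi_integrable_coord (μ := gaussianReal 0 1)
    (gauss_ind_integrable (1/10^16)) (⟨0, hn⟩ : Fin n)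
  -- integral values
  have hS2v := integral_S2 ξ hξ
  have hE2v : ∫ a : Fin n → ℝ, Real.exp (2 * ∑ i, a i * ξ i)
      ∂(Measure.pi fun _ => gaussianReal 0 1) = Real.exp 2 := by
    rw [integral_expS ξ 2 hξ]; norm_num
  have hEm2v : ∫ a : Fin n → ℝ, Real.exp ((-2) * ∑ i, a i * ξ i)
      ∂(Measure.pi fun _ => gaussianReal 0 1) = Real.exp 2 := by
    rw [integral_expS ξ (-2) hξ]; norm_num
  have hcv : ∫ a : Fin n → ℝ, (if |a ⟨0, hn⟩| < 1/10^16 then (1:ℝ) else 0)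
      ∂(Measure.pi fun _ => gaussianReal 0 1) ≤ 1/10^16 :=
    le_trans
      (le_of_eq (pi_integral_coord (fun x : ℝ => if |x| < (1/10^16 : ℝ) then (1:ℝ) else 0)
        (⟨0, hn⟩ : Fin n)))
      (gauss_ind_integral (by norm_num))
  have hcnn : 0 ≤ ∫ a : Fin n → ℝ, (if |a ⟨0, hn⟩| < 1/10^16 then (1:ℝ) else 0)
      ∂(Measure.pi fun _ => gaussianReal 0 1) := by
    apply integral_nonneg
    intro a
    dsimp only
    split <;> norm_num
  -- the lower-bound function L
  set L : (Fin n → ℝ) → ℝ := fun a =>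
    (∑ i, a i * ξ i) ^ 2
      - 729 * Real.exp (-(30:ℝ))
          * (Real.exp (2 * ∑ i, a i * ξ i) + Real.exp ((-2) * ∑ i, a i * ξ i))
      - (1/10^32 * (∑ i, a i * ξ i) ^ 2
          + 531441 / 10 ^ 11 / 2
              * (Real.exp (2 * ∑ i, a i * ξ i) + Real.exp ((-2) * ∑ i, a i * ξ i) + 2)
          + 10 ^ 11 / 2 * (if |a ⟨0, hn⟩| < 1/10^16 then (1:ℝ) else 0)) with hLdef
  have hBint : Integrable (fun a : Fin n → ℝ =>
      729 * Real.exp (-(30:ℝ))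
        * (Real.exp (2 * ∑ i, a i * ξ i) + Real.exp ((-2) * ∑ i, a i * ξ i)))
      (Measure.pi fun _ => gaussianReal 0 1) := (hE2.add hEm2).const_mul _
  have hsum2 : Integrable (fun a : Fin n → ℝ =>
      Real.exp (2 * ∑ i, a i * ξ i) + Real.exp ((-2) * ∑ i, a i * ξ i))
      (Measure.pi fun _ => gaussianReal 0 1) := hE2.add hEm2
  have hsum3 : Integrable (fun a : Fin n → ℝ =>
      Real.exp (2 * ∑ i, a i * ξ i) + Real.exp ((-2) * ∑ i, a i * ξ i) + 2)
      (Measure.pi fun _ => gaussianReal 0 1) := hsum2.add (integrable_const 2)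
  have hR1int : Integrable (fun a : Fin n → ℝ =>
      1/10^32 * (∑ i, a i * ξ i) ^ 2
        + 531441 / 10 ^ 11 / 2
            * (Real.exp (2 * ∑ i, a i * ξ i) + Real.exp ((-2) * ∑ i, a i * ξ i) + 2))
      (Measure.pi fun _ => gaussianReal 0 1) :=
    (hS2i.const_mul _).add (hsum3.const_mul _)
  have hRint : Integrable (fun a : Fin n → ℝ =>
      1/10^32 * (∑ i, a i * ξ i) ^ 2
        + 531441 / 10 ^ 11 / 2
            * (Real.exp (2 * ∑ i, a i * ξ i) + Real.exp ((-2) * ∑ i, a i * ξ i) + 2)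
        + 10 ^ 11 / 2 * (if |a ⟨0, hn⟩| < 1/10^16 then (1:ℝ) else 0))
      (Measure.pi fun _ => gaussianReal 0 1) := hR1int.add (hci.const_mul _)
  have hSBint : Integrable (fun a : Fin n → ℝ =>
      (∑ i, a i * ξ i) ^ 2
        - 729 * Real.exp (-(30:ℝ))
            * (Real.exp (2 * ∑ i, a i * ξ i) + Real.exp ((-2) * ∑ i, a i * ξ i)))
      (Measure.pi fun _ => gaussianReal 0 1) := hS2i.sub hBint
  have hLint : Integrable L (Measure.pi fun _ => gaussianReal 0 1) := hSBint.sub hRint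
  -- value of ∫ L
  have hLv : ∫ a, L a ∂(Measure.pi fun _ => gaussianReal 0 1)
      = 1 - 729 * Real.exp (-(30:ℝ)) * (Real.exp 2 + Real.exp 2)
        - (1/10^32 * 1
            + 531441 / 10 ^ 11 / 2 * (Real.exp 2 + Real.exp 2 + 2)
            + 10 ^ 11 / 2 * ∫ a : Fin n → ℝ, (if |a ⟨0, hn⟩| < 1/10^16 then (1:ℝ) else 0)
                ∂(Measure.pi fun _ => gaussianReal 0 1)) := by
    rw [hLdef]
    rw [integral_sub hSBint hRint, integral_sub hS2i hBint]
    rw [integral_const_mul, integral_add hE2 hEm2, hE2v, hEm2v, hS2v]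
    rw [integral_add hR1int (hci.const_mul _)]
    rw [integral_add (hS2i.const_mul _) (hsum3.const_mul _)]
    rw [integral_const_mul, integral_const_mul, integral_const_mul, hS2v]
    rw [integral_add hsum2 (integrable_const 2), integral_add hE2 hEm2, hE2v, hEm2v]
    have h2c : ∫ _a : Fin n → ℝ, (2:ℝ) ∂(Measure.pi fun _ => gaussianReal 0 1) = 2 := by
      simp [measure_univ]
    rw [h2c]
  -- numeric bounds
  have he1l : (2:ℝ) ≤ Real.exp 1 := by linarith [Real.add_one_le_exp (1:ℝ)]
  have hexp2 : Real.exp 2 ≤ 8 := by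
    have h12 : Real.exp 2 = Real.exp 1 * Real.exp 1 := by
      rw [← Real.exp_add]; norm_num
    nlinarith [Real.exp_one_lt_d9, Real.exp_pos 1]
  have hexp28 : Real.exp (-(28:ℝ)) ≤ 1/10^8 := by
    have hp : (2:ℝ) ^ (28:ℕ) ≤ Real.exp 1 ^ (28:ℕ) := pow_le_pow_left₀ (by norm_num) he1l 28
    have he : Real.exp 1 ^ (28:ℕ) = Real.exp 28 := by
      rw [← Real.exp_nat_mul]; norm_num
    have hneg : Real.exp (-(28:ℝ)) = (Real.exp 28)⁻¹ := Real.exp_neg 28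
    rw [hneg]
    have h1 : (10:ℝ)^8 ≤ (2:ℝ)^(28:ℕ) := by norm_num
    have h2 : (10:ℝ)^8 ≤ Real.exp 28 := le_trans h1 (le_trans hp (le_of_eq he))
    rw [show (1:ℝ)/10^8 = ((10:ℝ)^8)⁻¹ by norm_num]
    exact inv_anti₀ (by norm_num) h2
  have hmul : Real.exp (-(30:ℝ)) * Real.exp 2 = Real.exp (-(28:ℝ)) := by
    rw [← Real.exp_add]; norm_num
  have hBval : 729 * Real.exp (-(30:ℝ)) * (Real.exp 2 + Real.exp 2)
      = 1458 * Real.exp (-(28:ℝ)) := by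
    rw [← hmul]; ring
  -- 0.99 ≤ ∫ L
  have hLlower : (0.99:ℝ) ≤ ∫ a, L a ∂(Measure.pi fun _ => gaussianReal 0 1) := by
    rw [hLv, hBval]
    linarith [hexp28, hexp2, hcv, hcnn]
  -- measurability of the integrand
  have hSm : Measurable (fun a : Fin n → ℝ => ∑ i, a i * ξ i) :=
    Finset.measurable_sum _ fun i _ => (measurable_pi_apply i).mul_const _
  have hXm : Measurable (fun a : Fin n → ℝ => a ⟨0, hn⟩) := measurable_pi_apply _
  have hIm : Measurable (fun a : Fin n → ℝ =>
      (∑ i, a i * ξ i) ^ 2 * (a ⟨0, hn⟩) ^ 2 / (1/10^64 + (a ⟨0, hn⟩) ^ 2) *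
        φ ((∑ i, a i * ξ i) / 30)) := by
    apply Measurable.mul
    · exact ((hSm.pow_const 2).mul (hXm.pow_const 2)).div
        (measurable_const.add (hXm.pow_const 2))
    · exact (hφ_smooth.continuous.measurable).comp (hSm.div_const 30)
  -- pointwise bounds on the integrand
  have hInn : ∀ a : Fin n → ℝ, 0 ≤
      (∑ i, a i * ξ i) ^ 2 * (a ⟨0, hn⟩) ^ 2 / (1/10^64 + (a ⟨0, hn⟩) ^ 2) *
        φ ((∑ i, a i * ξ i) / 30) := by
    intro a
    apply mul_nonneg _ (hφ_range _).1
    positivity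
  have hIle : ∀ a : Fin n → ℝ,
      (∑ i, a i * ξ i) ^ 2 * (a ⟨0, hn⟩) ^ 2 / (1/10^64 + (a ⟨0, hn⟩) ^ 2) *
        φ ((∑ i, a i * ξ i) / 30) ≤ (∑ i, a i * ξ i) ^ 2 := by
    intro a
    have h1 : 0 ≤ (∑ i, a i * ξ i) ^ 2 * (a ⟨0, hn⟩) ^ 2 / (1/10^64 + (a ⟨0, hn⟩) ^ 2) := by
      positivity
    have h2 : (∑ i, a i * ξ i) ^ 2 * (a ⟨0, hn⟩) ^ 2 / (1/10^64 + (a ⟨0, hn⟩) ^ 2)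
        ≤ (∑ i, a i * ξ i) ^ 2 := by
      rw [div_le_iff₀ (hden a)]
      nlinarith [sq_nonneg (∑ i, a i * ξ i), sq_nonneg (a ⟨0, hn⟩),
        mul_nonneg (sq_nonneg (∑ i, a i * ξ i)) (sq_nonneg (a ⟨0, hn⟩))]
    calc (∑ i, a i * ξ i) ^ 2 * (a ⟨0, hn⟩) ^ 2 / (1/10^64 + (a ⟨0, hn⟩) ^ 2) *
          φ ((∑ i, a i * ξ i) / 30)
        ≤ (∑ i, a i * ξ i) ^ 2 * (a ⟨0, hn⟩) ^ 2 / (1/10^64 + (a ⟨0, hn⟩) ^ 2) * 1 := by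
          exact mul_le_mul_of_nonneg_left (hφ_range _).2 h1
      _ ≤ (∑ i, a i * ξ i) ^ 2 := by rw [mul_one]; exact h2
  -- integrability of the integrand
  have hIint : Integrable (fun a : Fin n → ℝ =>
      (∑ i, a i * ξ i) ^ 2 * (a ⟨0, hn⟩) ^ 2 / (1/10^64 + (a ⟨0, hn⟩) ^ 2) *
        φ ((∑ i, a i * ξ i) / 30)) (Measure.pi fun _ => gaussianReal 0 1) := by
    apply hS2i.mono' hIm.aestronglyMeasurable
    filter_upwards with a
    rw [Real.norm_eq_abs, abs_of_nonneg (hInn a)]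
    exact hIle a
  -- pointwise comparison
  have hpt : ∀ a : Fin n → ℝ, L a ≤
      (∑ i, a i * ξ i) ^ 2 * (a ⟨0, hn⟩) ^ 2 / (1/10^64 + (a ⟨0, hn⟩) ^ 2) *
        φ ((∑ i, a i * ξ i) / 30) := by
    intro a
    have hRnn : 0 ≤ 1/10^32 * (∑ i, a i * ξ i) ^ 2
        + 531441 / 10 ^ 11 / 2
            * (Real.exp (2 * ∑ i, a i * ξ i) + Real.exp ((-2) * ∑ i, a i * ξ i) + 2)
        + 10 ^ 11 / 2 * (if |a ⟨0, hn⟩| < 1/10^16 then (1:ℝ) else 0) := by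
      have h1 : (0:ℝ) ≤ if |a ⟨0, hn⟩| < 1/10^16 then (1:ℝ) else 0 := by
        split <;> norm_num
      have h2 := Real.exp_pos (2 * ∑ i, a i * ξ i)
      have h3 := Real.exp_pos ((-2) * ∑ i, a i * ξ i)
      have h4 := sq_nonneg (∑ i, a i * ξ i)
      positivity
    have hBnn : 0 ≤ 729 * Real.exp (-(30:ℝ))
        * (Real.exp (2 * ∑ i, a i * ξ i) + Real.exp ((-2) * ∑ i, a i * ξ i)) := by
      have h2 := Real.exp_pos (2 * ∑ i, a i * ξ i)
      have h3 := Real.exp_pos ((-2) * ∑ i, a i * ξ i)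
      positivity
    rcases le_or_gt |∑ i, a i * ξ i| 30 with hs | hs
    · -- main case : the cutoff is equal to 1
      have hφ1 : φ ((∑ i, a i * ξ i) / 30) = 1 := by
        apply hφ_one
        rw [abs_div, abs_of_pos (by norm_num : (0:ℝ) < 30), div_le_one (by norm_num)]
        exact hs
      rw [hφ1, mul_one]
      have hiden : (∑ i, a i * ξ i) ^ 2 * (a ⟨0, hn⟩) ^ 2 / (1/10^64 + (a ⟨0, hn⟩) ^ 2)
          = (∑ i, a i * ξ i) ^ 2
            - (1/10^64) * (∑ i, a i * ξ i) ^ 2 / (1/10^64 + (a ⟨0, hn⟩) ^ 2) := by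
        field_simp
        ring
      rw [hiden]
      have hkey : (1/10^64) * (∑ i, a i * ξ i) ^ 2 / (1/10^64 + (a ⟨0, hn⟩) ^ 2)
          ≤ 1/10^32 * (∑ i, a i * ξ i) ^ 2
            + 531441 / 10 ^ 11 / 2
                * (Real.exp (2 * ∑ i, a i * ξ i) + Real.exp ((-2) * ∑ i, a i * ξ i) + 2)
            + 10 ^ 11 / 2 * (if |a ⟨0, hn⟩| < 1/10^16 then (1:ℝ) else 0) := by
        rcases lt_or_ge |a ⟨0, hn⟩| (1/10^16) with hx | hx
        · -- near-singular region : use the AM-GM bound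
          rw [if_pos hx]
          have hds : (1/10^64 : ℝ) * (∑ i, a i * ξ i) ^ 2 / (1/10^64 + (a ⟨0, hn⟩) ^ 2)
              ≤ (∑ i, a i * ξ i) ^ 2 := by
            rw [div_le_iff₀ (hden a)]
            nlinarith [sq_nonneg (∑ i, a i * ξ i), sq_nonneg (a ⟨0, hn⟩),
              mul_nonneg (sq_nonneg (∑ i, a i * ξ i)) (sq_nonneg (a ⟨0, hn⟩))]
          have h729 : (∑ i, a i * ξ i) ^ 2
              ≤ 729 * (Real.exp (∑ i, a i * ξ i) + Real.exp (-(∑ i, a i * ξ i))) := by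
            calc (∑ i, a i * ξ i) ^ 2 ≤ 729 * Real.exp |∑ i, a i * ξ i| :=
                  sq_le_729_exp_abs _
              _ ≤ 729 * (Real.exp (∑ i, a i * ξ i) + Real.exp (-(∑ i, a i * ξ i))) := by
                  have := exp_abs_le_sum (∑ i, a i * ξ i)
                  linarith
          have hamgm := amgm_bound (∑ i, a i * ξ i)
          have hsq := sq_nonneg (∑ i, a i * ξ i)
          linarith
        · -- away from the singularity : 1/10^64 / (…) ≤ 1/10^32
          rw [if_neg (not_lt.2 hx)]
          have hx2 : ((1:ℝ)/10^16) ^ 2 ≤ (a ⟨0, hn⟩) ^ 2 := by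
            rw [← sq_abs (a ⟨0, hn⟩)]
            exact pow_le_pow_left₀ (by norm_num) hx 2
          rw [div_le_iff₀ (hden a)]
          have h2 := Real.exp_pos (2 * ∑ i, a i * ξ i)
          have h3 := Real.exp_pos ((-2) * ∑ i, a i * ξ i)
          have hA0 : (0:ℝ) ≤ 1/10^32 * (∑ i, a i * ξ i) ^ 2 := by positivity
          have e1 : (1/10^32 * (∑ i, a i * ξ i) ^ 2) * ((1/10^16 : ℝ)^2)
              ≤ (1/10^32 * (∑ i, a i * ξ i) ^ 2) * (a ⟨0, hn⟩)^2 :=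
            mul_le_mul_of_nonneg_left hx2 hA0
          have e0 : (1/10^32 * (∑ i, a i * ξ i) ^ 2) * ((1/10^16 : ℝ)^2)
              = 1/10^64 * (∑ i, a i * ξ i) ^ 2 := by ring
          have hT : (0:ℝ) ≤ 531441 / 10 ^ 11 / 2
              * (Real.exp (2 * ∑ i, a i * ξ i) + Real.exp ((-2) * ∑ i, a i * ξ i) + 2) := by
            positivity
          have hTp : (0:ℝ) ≤ (531441 / 10 ^ 11 / 2
              * (Real.exp (2 * ∑ i, a i * ξ i) + Real.exp ((-2) * ∑ i, a i * ξ i) + 2))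
              * (1/10^64 + (a ⟨0, hn⟩)^2) := mul_nonneg hT (hden a).le
          have expand : (1/10^32 * (∑ i, a i * ξ i) ^ 2
              + 531441 / 10 ^ 11 / 2
                  * (Real.exp (2 * ∑ i, a i * ξ i) + Real.exp ((-2) * ∑ i, a i * ξ i) + 2)
              + 10 ^ 11 / 2 * 0) * (1/10^64 + (a ⟨0, hn⟩)^2)
              = (1/10^32 * (∑ i, a i * ξ i) ^ 2) * (1/10^64)
                + (1/10^32 * (∑ i, a i * ξ i) ^ 2) * (a ⟨0, hn⟩)^2
                + (531441 / 10 ^ 11 / 2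
                    * (Real.exp (2 * ∑ i, a i * ξ i) + Real.exp ((-2) * ∑ i, a i * ξ i) + 2))
                  * (1/10^64 + (a ⟨0, hn⟩)^2) := by ring
          rw [expand]
          nlinarith [e1, e0, hTp, hA0]
      rw [hLdef]
      dsimp only
      linarith
    · -- tail case : the integrand is nonnegative, L is nonpositive
      have hI0 := hInn a
      have htb := tail_bound hs
      rw [hLdef]
      dsimp only
      linarith
  calc (0.99:ℝ) ≤ ∫ a, L a ∂(Measure.pi fun _ => gaussianReal 0 1) := hLlower
    _ ≤ _ := integral_mono hLint hIint hpt
end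

section
/- Let X, Y be independent standard Gaussian random variables. Then for all ε ∈ (0,1], E[ ε(sX + √(1−s²)Y)² / (ε + X²) ] ≤ C√ε for some absolute constant C, uniformly over s ∈ [−1,1]. -/
/-!
Since `s² + (1 - s²) = 1`, Cauchy–Schwarz bounds the integrand by
`ε x² / (ε + x²) + ε y² / (ε + x²) ≤ ε + ε y² / (ε + x²)`, and the second term factors over the
independent coordinates into `E[ε / (ε + X²)] · E[Y²] = E[ε / (ε + X²)]`. The Gaussian density is
bounded, and `ε / (ε + x²)` is `π √ε` times the Cauchy density of scale `√ε`, so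
`E[ε / (ε + X²)] ≤ (2π)^{-1/2} π √ε`.
-/

open MeasureTheory ProbabilityTheory Real
open scoped NNReal

namespace ProbabilityTheory

lemma gaussianPDFReal_le (μ : ℝ) (v : ℝ≥0) (x : ℝ) :
    gaussianPDFReal μ v x ≤ (√(2 * π * v))⁻¹ := by
  have hexp : rexp (-(x - μ) ^ 2 / (2 * v)) ≤ 1 :=
    exp_le_one_iff.mpr (div_nonpos_of_nonpos_of_nonneg (by nlinarith [sq_nonneg (x - μ)])
      (by positivity))
  simpa [gaussianPDFReal] using mul_le_of_le_one_right (by positivity) hexp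

lemma integral_gaussianReal_le {μ : ℝ} {v : ℝ≥0} (hv : v ≠ 0) {f : ℝ → ℝ} (hf : 0 ≤ f)
    (hfi : Integrable f) :
    ∫ x, f x ∂gaussianReal μ v ≤ (√(2 * π * v))⁻¹ * ∫ x, f x := by
  rw [integral_gaussianReal_eq_integral_smul hv, ← integral_const_mul]
  exact integral_mono_of_nonneg
    (ae_of_all _ fun x => mul_nonneg (gaussianPDFReal_nonneg μ v x) (hf x)) (hfi.const_mul _)
    (ae_of_all _ fun x => mul_le_mul_of_nonneg_right (gaussianPDFReal_le μ v x) (hf x))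

lemma integral_sq_gaussianReal (v : ℝ≥0) : ∫ x, x ^ 2 ∂gaussianReal 0 v = v := by
  simpa [integral_id_gaussianReal] using
    (variance_eq_sub (memLp_id_gaussianReal (μ := 0) (v := v) 2)).symm

lemma div_add_sq_eq_mul_cauchyPDFReal {ε : ℝ} (hε : 0 < ε) (x : ℝ) :
    ε / (ε + x ^ 2) = π * √ε * cauchyPDFReal 0 (√ε).toNNReal x := by
  rw [cauchyPDFReal_def, coe_toNNReal _ (sqrt_nonneg ε), sub_zero, sq_sqrt hε.le]
  have hsqrt : 0 < √ε := sqrt_pos.mpr hε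
  field_simp
  rw [sq_sqrt hε.le]
  ring

end ProbabilityTheory

lemma integrable_div_add_sq {ε : ℝ} (hε : 0 < ε) :
    Integrable fun x : ℝ => ε / (ε + x ^ 2) := by
  simp_rw [div_add_sq_eq_mul_cauchyPDFReal hε]
  exact (integrable_cauchyPDFReal 0).const_mul _

lemma integrable_div_add_sq_of_isFiniteMeasure {μ : Measure ℝ} [IsFiniteMeasure μ] {ε : ℝ}
    (hε : 0 < ε) : Integrable (fun x : ℝ => ε / (ε + x ^ 2)) μ :=
  Integrable.of_bound
    (continuous_const.div (by fun_prop) fun x => by positivity).aestronglyMeasurable 1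
    (ae_of_all _ fun x => by
      rw [norm_of_nonneg (by positivity), div_le_one (by positivity)]
      nlinarith [sq_nonneg x])

lemma integral_div_add_sq {ε : ℝ} (hε : 0 < ε) : ∫ x : ℝ, ε / (ε + x ^ 2) = π * √ε := by
  simp_rw [div_add_sq_eq_mul_cauchyPDFReal hε]
  rw [integral_const_mul, integral_cauchyPDFReal_eq_one _ (by simpa using hε), mul_one]

lemma integral_div_add_sq_gaussianReal_le (μ : ℝ) {v : ℝ≥0} (hv : v ≠ 0) {ε : ℝ}
    (hε : 0 < ε) :
    ∫ x, ε / (ε + x ^ 2) ∂gaussianReal μ v ≤ (√(2 * π * v))⁻¹ * (π * √ε) := by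
  rw [← integral_div_add_sq hε]
  exact integral_gaussianReal_le hv (fun x => by positivity) (integrable_div_add_sq hε)

lemma div_add_sq_mul_sq_le {ε s t x y : ℝ} (hε : 0 < ε) (hst : s ^ 2 + t ^ 2 = 1) :
    ε * (s * x + t * y) ^ 2 / (ε + x ^ 2) ≤ ε + ε / (ε + x ^ 2) * y ^ 2 := by
  have hd : 0 < ε + x ^ 2 := by positivity
  have cauchy_schwarz : (s * x + t * y) ^ 2 ≤ x ^ 2 + y ^ 2 := by
    nlinarith [sq_nonneg (s * y - t * x)]
  have hrhs : ε + ε / (ε + x ^ 2) * y ^ 2 = (ε * (ε + x ^ 2) + ε * y ^ 2) / (ε + x ^ 2) := by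
    field_simp
  rw [hrhs, div_le_div_iff_of_pos_right hd]
  nlinarith [mul_le_mul_of_nonneg_left cauchy_schwarz hε.le, sq_nonneg x]

theorem expectation_sqrt_eps_bound :
    ∃ C : ℝ, 0 < C ∧
      ∀ ε : ℝ, 0 < ε → ε ≤ 1 → ∀ s : ℝ, -1 ≤ s → s ≤ 1 →
        (∫ p : ℝ × ℝ,
            ε * (s * p.1 + Real.sqrt (1 - s ^ 2) * p.2) ^ 2 / (ε + p.1 ^ 2)
            ∂((gaussianReal 0 1).prod (gaussianReal 0 1))) ≤
          C * Real.sqrt ε := by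
  refine ⟨1 + π, by positivity, fun ε hε hε1 s hs1 hs2 => ?_⟩
  have hst : s ^ 2 + √(1 - s ^ 2) ^ 2 = 1 := by rw [sq_sqrt (by nlinarith)]; ring
  have hg : Integrable (fun y : ℝ => y ^ 2) (gaussianReal 0 1) :=
    (memLp_id_gaussianReal 2).integrable_sq
  have hfg := (integrable_div_add_sq_of_isFiniteMeasure (μ := gaussianReal 0 1) hε).mul_prod hg
  have hpi : 1 ≤ √(2 * π * (1 : ℝ≥0)) := one_le_sqrt.mpr (by norm_num; linarith [pi_gt_three])
  calc _ ≤ ∫ p : ℝ × ℝ, ε + ε / (ε + p.1 ^ 2) * p.2 ^ 2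
          ∂(gaussianReal 0 1).prod (gaussianReal 0 1) :=
        integral_mono_of_nonneg (ae_of_all _ fun p => by positivity)
          ((integrable_const ε).add hfg) (ae_of_all _ fun p => div_add_sq_mul_sq_le hε hst)
    _ = ε + (∫ x, ε / (ε + x ^ 2) ∂gaussianReal 0 1) * ∫ y, y ^ 2 ∂gaussianReal 0 1 := by
        rw [integral_add (integrable_const ε) hfg, integral_const,
          integral_prod_mul (fun x : ℝ => ε / (ε + x ^ 2)) (fun y : ℝ => y ^ 2)]
        simp
    _ ≤ √ε + (√(2 * π * (1 : ℝ≥0)))⁻¹ * (π * √ε) * 1 := by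
        rw [integral_sq_gaussianReal, NNReal.coe_one]
        gcongr
        · exact le_sqrt_self_iff.mpr hε1
        · exact integral_div_add_sq_gaussianReal_le 0 one_ne_zero hε
    _ ≤ (1 + π) * √ε := by
        nlinarith [mul_le_mul_of_nonneg_right (inv_le_one_of_one_le₀ hpi)
          (by positivity : 0 ≤ π * √ε)]
end

section
/- Let X_k = a_k·e₁ ≠ 0 and Z_k = a_k·û for vectors a_k, e₁, û ∈ ℝⁿ. If a point u = √R û with R > 0 is a critical point of f(u) = (1/m)Σ_k ((a_k·u)²−X_k²)²/X_k², then R·(1/m)Σ_k Z_k⁴/X_k² = (1/m)Σ_k Z_k², and R·(1/m)Σ_k Z_k³/X_k = (1/m)Σ_k Z_k X_k; consequently ((1/m)Σ Z_k²)·((1/m)Σ Z_k³/X_k) = ((1/m)Σ Z_k⁴/X_k²)·((1/m)Σ Z_k X_k). -/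
open Finset

theorem qim1_critical_point_identities
    (n m : ℕ) (hm : 0 < m) (a : Fin m → Fin n → ℝ) (e₁ v : Fin n → ℝ)
    (hX : ∀ k, (∑ i, a k i * e₁ i) ≠ 0)
    (hv : (∑ i, v i ^ 2) = 1) (R : ℝ) (hR : 0 < R)
    (hcrit : fderiv ℝ
        (fun u : Fin n → ℝ => (1 / (m : ℝ)) * ∑ k,
          ((∑ i, a k i * u i) ^ 2 - (∑ i, a k i * e₁ i) ^ 2) ^ 2 /
            (∑ i, a k i * e₁ i) ^ 2)
        (Real.sqrt R • v) = 0) :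
    R * ((1 / (m : ℝ)) * ∑ k,
        (∑ i, a k i * v i) ^ 4 / (∑ i, a k i * e₁ i) ^ 2) =
      (1 / (m : ℝ)) * ∑ k, (∑ i, a k i * v i) ^ 2 ∧
    R * ((1 / (m : ℝ)) * ∑ k,
        (∑ i, a k i * v i) ^ 3 / (∑ i, a k i * e₁ i)) =
      (1 / (m : ℝ)) * ∑ k, (∑ i, a k i * v i) * (∑ i, a k i * e₁ i) ∧
    ((1 / (m : ℝ)) * ∑ k, (∑ i, a k i * v i) ^ 2) *
        ((1 / (m : ℝ)) * ∑ k, (∑ i, a k i * v i) ^ 3 / (∑ i, a k i * e₁ i)) =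
      ((1 / (m : ℝ)) * ∑ k, (∑ i, a k i * v i) ^ 4 / (∑ i, a k i * e₁ i) ^ 2) *
        ((1 / (m : ℝ)) * ∑ k, (∑ i, a k i * v i) * (∑ i, a k i * e₁ i)) := by
  set p : Fin n → ℝ := Real.sqrt R • v with hp
  set X : Fin m → ℝ := fun k => ∑ i, a k i * e₁ i with hXdef
  set Z : Fin m → ℝ := fun k => ∑ i, a k i * v i with hZdef
  set L : Fin m → (Fin n → ℝ) →L[ℝ] ℝ :=
    fun k => ∑ i, a k i • (ContinuousLinearMap.proj i) with hLdef
  have hLapp : ∀ k w, L k w = ∑ i, a k i * w i := by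
    intro k w
    simp [hLdef, ContinuousLinearMap.sum_apply, ContinuousLinearMap.smul_apply,
      ContinuousLinearMap.proj_apply, smul_eq_mul]
  have hs : ∀ k, HasFDerivAt (fun u : Fin n → ℝ => ∑ i, a k i * u i) (L k) p := by
    intro k
    have h1 : (fun u : Fin n → ℝ => ∑ i, a k i * u i) = ⇑(L k) := by
      funext w; rw [hLapp]
    rw [h1]
    exact (L k).hasFDerivAt
  have hq : ∀ k, HasFDerivAt
      (fun u : Fin n → ℝ => (∑ i, a k i * u i) * (∑ i, a k i * u i) - (X k) ^ 2)
      ((∑ i, a k i * p i) • L k + (∑ i, a k i * p i) • L k) p :=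
    fun k => ((hs k).mul (hs k)).sub_const _
  set q : Fin m → ℝ := fun k => (∑ i, a k i * p i) * (∑ i, a k i * p i) - (X k) ^ 2 with hqdef
  set D : Fin m → (Fin n → ℝ) →L[ℝ] ℝ := fun k =>
    ((q k • ((∑ i, a k i * p i) • L k + (∑ i, a k i * p i) • L k)
      + q k • ((∑ i, a k i * p i) • L k + (∑ i, a k i * p i) • L k)) : _) with hDdef
  have hterm : ∀ k, HasFDerivAt
      (fun u : Fin n → ℝ => (1 / (X k) ^ 2) * (((∑ i, a k i * u i) * (∑ i, a k i * u i) - (X k) ^ 2) *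
        ((∑ i, a k i * u i) * (∑ i, a k i * u i) - (X k) ^ 2)))
      ((1 / (X k) ^ 2) • D k) p := by
    intro k
    exact ((hq k).mul (hq k)).const_mul (1 / (X k) ^ 2)
  have hf : HasFDerivAt
      (fun u : Fin n → ℝ => (1 / (m : ℝ)) * ∑ k,
        ((∑ i, a k i * u i) ^ 2 - (X k) ^ 2) ^ 2 / (X k) ^ 2)
      ((1 / (m : ℝ)) • ∑ k, (1 / (X k) ^ 2) • D k) p := by
    have heq : (fun u : Fin n → ℝ => (1 / (m : ℝ)) * ∑ k,
        ((∑ i, a k i * u i) ^ 2 - (X k) ^ 2) ^ 2 / (X k) ^ 2)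
        = (fun u : Fin n → ℝ => (1 / (m : ℝ)) * ∑ k,
          (1 / (X k) ^ 2) * (((∑ i, a k i * u i) * (∑ i, a k i * u i) - (X k) ^ 2) *
            ((∑ i, a k i * u i) * (∑ i, a k i * u i) - (X k) ^ 2))) := by
      funext u
      congr 1
      apply Finset.sum_congr rfl
      intro k _
      ring
    rw [heq]
    exact (HasFDerivAt.fun_sum (fun k _ => hterm k)).const_mul _
  have hF0 : ((1 / (m : ℝ)) • ∑ k, (1 / (X k) ^ 2) • D k
      : (Fin n → ℝ) →L[ℝ] ℝ) = 0 := by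
    rw [← hf.fderiv]
    exact hcrit
  -- key: ∑ a k i * p i = √R * Z k
  have hsp : ∀ k, (∑ i, a k i * p i) = Real.sqrt R * Z k := by
    intro k
    rw [hZdef, Finset.mul_sum]
    apply Finset.sum_congr rfl
    intro i _
    simp [hp, Pi.smul_apply, smul_eq_mul]
    ring
  have hqval : ∀ k, q k = R * Z k ^ 2 - X k ^ 2 := by
    intro k
    rw [hqdef]
    simp only [hsp]
    rw [show Real.sqrt R * Z k * (Real.sqrt R * Z k)
      = (Real.sqrt R * Real.sqrt R) * Z k ^ 2 by ring,
      Real.mul_self_sqrt hR.le]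
  have happ : ∀ w : Fin n → ℝ,
      (1 / (m : ℝ)) * ∑ k, (1 / (X k) ^ 2) *
        (4 * (Real.sqrt R * Z k) * (R * Z k ^ 2 - X k ^ 2) * (∑ i, a k i * w i)) = 0 := by
    intro w
    have := congrFun (congrArg (DFunLike.coe) hF0) w
    simp only [ContinuousLinearMap.smul_apply, ContinuousLinearMap.sum_apply,
      ContinuousLinearMap.add_apply, ContinuousLinearMap.zero_apply, smul_eq_mul,
      hDdef] at this
    rw [← this]
    congr 1
    · apply Finset.sum_congr rfl
      intro k _
      simp only [ContinuousLinearMap.smul_apply, ContinuousLinearMap.add_apply,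
        smul_eq_mul, hLapp, hsp, hqval]
      ring
  have hsqrt : Real.sqrt R ≠ 0 := by positivity
  have hm' : (1 / (m : ℝ)) ≠ 0 := by
    simp [Nat.cast_pos.mpr hm, ne_of_gt]
  -- equation 1: test with v
  have h1 : ∑ k, (R * Z k ^ 4 / X k ^ 2 - Z k ^ 2) = 0 := by
    have hv' := happ v
    rw [mul_eq_zero] at hv'
    rcases hv' with h | h
    · exact absurd h hm'
    · have : ∑ k, (R * Z k ^ 4 / X k ^ 2 - Z k ^ 2)
          = (1 / (4 * Real.sqrt R)) * ∑ k, (1 / (X k) ^ 2) *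
            (4 * (Real.sqrt R * Z k) * (R * Z k ^ 2 - X k ^ 2) * (∑ i, a k i * v i)) := by
        rw [Finset.mul_sum]
        apply Finset.sum_congr rfl
        intro k _
        have hZk : (∑ i, a k i * v i) = Z k := rfl
        rw [hZk]
        have hXk : X k ≠ 0 := hX k
        field_simp
      rw [this, h, mul_zero]
  have h2 : ∑ k, (R * Z k ^ 3 / X k - Z k * X k) = 0 := by
    have he' := happ e₁
    rw [mul_eq_zero] at he'
    rcases he' with h | h
    · exact absurd h hm'
    · have : ∑ k, (R * Z k ^ 3 / X k - Z k * X k)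
          = (1 / (4 * Real.sqrt R)) * ∑ k, (1 / (X k) ^ 2) *
            (4 * (Real.sqrt R * Z k) * (R * Z k ^ 2 - X k ^ 2) * (∑ i, a k i * e₁ i)) := by
        rw [Finset.mul_sum]
        apply Finset.sum_congr rfl
        intro k _
        have hXk' : (∑ i, a k i * e₁ i) = X k := rfl
        rw [hXk']
        have hXk : X k ≠ 0 := hX k
        field_simp
      rw [this, h, mul_zero]
  rw [Finset.sum_sub_distrib] at h1 h2
  have e1 : R * ((1 / (m : ℝ)) * ∑ k, Z k ^ 4 / X k ^ 2) = (1 / (m : ℝ)) * ∑ k, Z k ^ 2 := by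
    have : ∑ k, R * Z k ^ 4 / X k ^ 2 = ∑ k, Z k ^ 2 := by linarith
    rw [← this, Finset.mul_sum, Finset.mul_sum, Finset.mul_sum]
    apply Finset.sum_congr rfl
    intro k _
    ring
  have e2 : R * ((1 / (m : ℝ)) * ∑ k, Z k ^ 3 / X k) = (1 / (m : ℝ)) * ∑ k, Z k * X k := by
    have : ∑ k, R * Z k ^ 3 / X k = ∑ k, Z k * X k := by linarith
    rw [← this, Finset.mul_sum, Finset.mul_sum, Finset.mul_sum]
    apply Finset.sum_congr rfl
    intro k _
    ring
  refine ⟨e1, e2, ?_⟩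
  rw [← e1, ← e2]
  ring
end

section
/- Let β > 0 and let a_k ∈ ℝⁿ with X_k = a_k·e₁ ≠ 0 for all k. For f(u) = (1/m)Σ_k ((a_k·u)² − X_k²)²/(β|u|² + X_k²), writing u = √t ξ with ξ a unit vector, the function G(t) = f(√t ξ) satisfies G'(0) = −β − 2·(1/m)Σ_k (a_k·ξ)². In particular G'(0) ≤ −β < 0 for every unit vector ξ. -/
open Finset

theorem qim2_radial_derivative_at_zero
    (n m : ℕ) (hm : 0 < m) (β : ℝ) (hβ : 0 < β)
    (a : Fin m → Fin n → ℝ) (e₁ : Fin n → ℝ)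
    (hX : ∀ k, (∑ i, a k i * e₁ i) ≠ 0)
    (ξ : Fin n → ℝ) (hξ : (∑ i, ξ i ^ 2) = 1) :
    derivWithin
        (fun t : ℝ => (1 / (m : ℝ)) * ∑ k,
          ((∑ i, a k i * (Real.sqrt t • ξ) i) ^ 2 - (∑ i, a k i * e₁ i) ^ 2) ^ 2 /
            (β * (∑ i, (Real.sqrt t • ξ) i ^ 2) + (∑ i, a k i * e₁ i) ^ 2))
        (Set.Ici 0) 0 =
      -β - 2 * ((1 / (m : ℝ)) * ∑ k, (∑ i, a k i * ξ i) ^ 2) ∧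
    derivWithin
        (fun t : ℝ => (1 / (m : ℝ)) * ∑ k,
          ((∑ i, a k i * (Real.sqrt t • ξ) i) ^ 2 - (∑ i, a k i * e₁ i) ^ 2) ^ 2 /
            (β * (∑ i, (Real.sqrt t • ξ) i ^ 2) + (∑ i, a k i * e₁ i) ^ 2))
        (Set.Ici 0) 0 ≤ -β := by
  set X : Fin m → ℝ := fun k => ∑ i, a k i * e₁ i with hXdef
  set c : Fin m → ℝ := fun k => (∑ i, a k i * ξ i) ^ 2 with hcdef
  set F : ℝ → ℝ := fun t => (1 / (m : ℝ)) * ∑ k,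
      (t * c k - X k ^ 2) ^ 2 / (β * t + X k ^ 2) with hFdef
  have hmne : (m : ℝ) ≠ 0 := Nat.cast_ne_zero.mpr hm.ne'
  have heq : Set.EqOn
      (fun t : ℝ => (1 / (m : ℝ)) * ∑ k,
          ((∑ i, a k i * (Real.sqrt t • ξ) i) ^ 2 - (∑ i, a k i * e₁ i) ^ 2) ^ 2 /
            (β * (∑ i, (Real.sqrt t • ξ) i ^ 2) + (∑ i, a k i * e₁ i) ^ 2))
      F (Set.Ici 0) := by
    intro t ht
    simp only [Set.mem_Ici] at ht
    have h1 : ∀ k, (∑ i, a k i * (Real.sqrt t • ξ) i) ^ 2 = t * c k := by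
      intro k
      have : (∑ i, a k i * (Real.sqrt t • ξ) i) = Real.sqrt t * ∑ i, a k i * ξ i := by
        rw [Finset.mul_sum]
        refine Finset.sum_congr rfl fun i _ => ?_
        simp [Pi.smul_apply, smul_eq_mul]; ring
      rw [this, mul_pow, Real.sq_sqrt ht, hcdef]
    have h2 : (∑ i, (Real.sqrt t • ξ) i ^ 2) = t := by
      have : (∑ i, (Real.sqrt t • ξ) i ^ 2) = t * ∑ i, ξ i ^ 2 := by
        rw [Finset.mul_sum]
        refine Finset.sum_congr rfl fun i _ => ?_
        simp [Pi.smul_apply, smul_eq_mul, mul_pow, Real.sq_sqrt ht]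
      rw [this, hξ, mul_one]
    simp only [h1, h2, hFdef, hXdef]
  have hDW : derivWithin
      (fun t : ℝ => (1 / (m : ℝ)) * ∑ k,
          ((∑ i, a k i * (Real.sqrt t • ξ) i) ^ 2 - (∑ i, a k i * e₁ i) ^ 2) ^ 2 /
            (β * (∑ i, (Real.sqrt t • ξ) i ^ 2) + (∑ i, a k i * e₁ i) ^ 2))
      (Set.Ici 0) 0 = derivWithin F (Set.Ici 0) 0 :=
    derivWithin_congr heq (heq (Set.self_mem_Ici))
  have hF : HasDerivAt F (-β - 2 * ((1 / (m : ℝ)) * ∑ k, c k)) 0 := by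
    have hterm : ∀ k : Fin m, HasDerivAt
        (fun t : ℝ => (t * c k - X k ^ 2) ^ 2 / (β * t + X k ^ 2))
        (-2 * c k - β) 0 := by
      intro k
      have hXk := hX k
      have hu : HasDerivAt (fun t : ℝ => (t * c k - X k ^ 2) ^ 2)
          (2 * (0 * c k - X k ^ 2) ^ 1 * c k) 0 := by
        have h0 : HasDerivAt (fun t : ℝ => t * c k - X k ^ 2) (c k) 0 := by
          simpa using ((hasDerivAt_id (0:ℝ)).mul_const (c k)).sub_const (X k ^ 2)
        simpa using h0.fun_pow 2
      have hv : HasDerivAt (fun t : ℝ => β * t + X k ^ 2) β 0 := by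
        simpa using ((hasDerivAt_id (0:ℝ)).const_mul β).add_const (X k ^ 2)
      have hvne : (β * 0 + X k ^ 2) ≠ 0 := by
        simpa using pow_ne_zero 2 hXk
      have := hu.div hv hvne
      refine this.congr_deriv ?_
      have hX2 : X k ^ 2 ≠ 0 := pow_ne_zero 2 hXk
      field_simp
      ring
    have hsum : HasDerivAt (fun t : ℝ => ∑ k, (t * c k - X k ^ 2) ^ 2 / (β * t + X k ^ 2))
        (∑ k, (-2 * c k - β)) 0 :=
      HasDerivAt.fun_sum fun k _ => hterm k
    have := hsum.const_mul (1 / (m : ℝ))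
    refine this.congr_deriv ?_
    rw [Finset.sum_sub_distrib, Finset.sum_const]
    have h2c : ∑ k, -2 * c k = -2 * ∑ k, c k := by rw [Finset.mul_sum]
    rw [h2c, Finset.card_univ, Fintype.card_fin]
    field_simp
    ring
  have hkey : derivWithin F (Set.Ici 0) 0 = -β - 2 * ((1 / (m : ℝ)) * ∑ k, c k) :=
    (hF.hasDerivWithinAt).derivWithin (uniqueDiffOn_Ici 0 0 Set.self_mem_Ici)
  have hmain : derivWithin
      (fun t : ℝ => (1 / (m : ℝ)) * ∑ k,
          ((∑ i, a k i * (Real.sqrt t • ξ) i) ^ 2 - (∑ i, a k i * e₁ i) ^ 2) ^ 2 /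
            (β * (∑ i, (Real.sqrt t • ξ) i ^ 2) + (∑ i, a k i * e₁ i) ^ 2))
      (Set.Ici 0) 0 = -β - 2 * ((1 / (m : ℝ)) * ∑ k, c k) := hDW.trans hkey
  refine ⟨hmain, ?_⟩
  rw [hmain]
  have hc : 0 ≤ (1 / (m : ℝ)) * ∑ k, c k := by
    apply mul_nonneg (by positivity)
    exact Finset.sum_nonneg fun k _ => sq_nonneg _
  linarith
end

section
/- Let β₁, β₂ > 0 and a_k ∈ ℝⁿ with X_k = a_k·e₁ ≠ 0 for all k. For f(u) = (1/m)Σ_k ((a_k·u)² − X_k²)²/(|u|² + β₁(a_k·u)² + β₂X_k²), writing u = √t ξ with ξ a unit vector, the function G(t) = f(√t ξ) satisfies G'(0) = −1/β₂² − ((β₁+2β₂)/β₂²)·(1/m)Σ_k (a_k·ξ)². In particular G'(0) < 0 for every unit vector ξ. -/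
open Finset

theorem qim3_radial_derivative_at_zero
    (n m : ℕ) (hm : 0 < m) (β₁ β₂ : ℝ) (hβ₁ : 0 < β₁) (hβ₂ : 0 < β₂)
    (a : Fin m → Fin n → ℝ) (e₁ : Fin n → ℝ)
    (hX : ∀ k, (∑ i, a k i * e₁ i) ≠ 0)
    (ξ : Fin n → ℝ) (hξ : (∑ i, ξ i ^ 2) = 1) :
    derivWithin
        (fun t : ℝ => (1 / (m : ℝ)) * ∑ k,
          ((∑ i, a k i * (Real.sqrt t • ξ) i) ^ 2 - (∑ i, a k i * e₁ i) ^ 2) ^ 2 /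
            ((∑ i, (Real.sqrt t • ξ) i ^ 2) + β₁ * (∑ i, a k i * (Real.sqrt t • ξ) i) ^ 2
              + β₂ * (∑ i, a k i * e₁ i) ^ 2))
        (Set.Ici 0) 0 =
      -(1 / β₂ ^ 2) - ((β₁ + 2 * β₂) / β₂ ^ 2) *
        ((1 / (m : ℝ)) * ∑ k, (∑ i, a k i * ξ i) ^ 2) ∧
    derivWithin
        (fun t : ℝ => (1 / (m : ℝ)) * ∑ k,
          ((∑ i, a k i * (Real.sqrt t • ξ) i) ^ 2 - (∑ i, a k i * e₁ i) ^ 2) ^ 2 /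
            ((∑ i, (Real.sqrt t • ξ) i ^ 2) + β₁ * (∑ i, a k i * (Real.sqrt t • ξ) i) ^ 2
              + β₂ * (∑ i, a k i * e₁ i) ^ 2))
        (Set.Ici 0) 0 < 0 := by
  set A : Fin m → ℝ := fun k => ∑ i, a k i * ξ i with hA
  set X : Fin m → ℝ := fun k => ∑ i, a k i * e₁ i with hXd
  set g : ℝ → ℝ := fun t => (1 / (m : ℝ)) * ∑ k,
      (t * (A k) ^ 2 - (X k) ^ 2) ^ 2 /
        (t * (1 + β₁ * (A k) ^ 2) + β₂ * (X k) ^ 2) with hg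
  have heq : Set.EqOn (fun t : ℝ => (1 / (m : ℝ)) * ∑ k,
          ((∑ i, a k i * (Real.sqrt t • ξ) i) ^ 2 - (∑ i, a k i * e₁ i) ^ 2) ^ 2 /
            ((∑ i, (Real.sqrt t • ξ) i ^ 2) + β₁ * (∑ i, a k i * (Real.sqrt t • ξ) i) ^ 2
              + β₂ * (∑ i, a k i * e₁ i) ^ 2)) g (Set.Ici 0) := by
    intro t ht
    have hst : Real.sqrt t ^ 2 = t := Real.sq_sqrt ht
    have h1 : ∀ k, (∑ i, a k i * (Real.sqrt t • ξ) i) = Real.sqrt t * A k := by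
      intro k
      simp only [Pi.smul_apply, smul_eq_mul, hA, Finset.mul_sum]
      exact Finset.sum_congr rfl fun i _ => by ring
    have h2 : (∑ i, (Real.sqrt t • ξ) i ^ 2) = t := by
      simp only [Pi.smul_apply, smul_eq_mul, mul_pow]
      rw [← Finset.mul_sum, hξ, mul_one, hst]
    simp only [h1, h2, mul_pow, hst]
    congr 1
    refine Finset.sum_congr rfl fun k _ => ?_
    congr 1
    ring
  rw [derivWithin_congr heq (heq (Set.self_mem_Ici))]
  have hterm : ∀ k : Fin m, HasDerivAt
      (fun t : ℝ => (t * (A k) ^ 2 - (X k) ^ 2) ^ 2 /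
        (t * (1 + β₁ * (A k) ^ 2) + β₂ * (X k) ^ 2))
      (-(1 / β₂ ^ 2) - ((β₁ + 2 * β₂) / β₂ ^ 2) * (A k) ^ 2) 0 := by
    intro k
    have hX2 : (X k) ^ 2 ≠ 0 := pow_ne_zero 2 (hX k)
    have hX2pos : 0 < (X k) ^ 2 := lt_of_le_of_ne (sq_nonneg _) (Ne.symm hX2)
    have hden : (0 : ℝ) * (1 + β₁ * (A k) ^ 2) + β₂ * (X k) ^ 2 ≠ 0 := by
      have : 0 < β₂ * (X k) ^ 2 := mul_pos hβ₂ hX2pos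
      simpa using this.ne'
    have h1 : HasDerivAt (fun t : ℝ => (t * (A k) ^ 2 - (X k) ^ 2) ^ 2)
        (2 * ((0 : ℝ) * (A k) ^ 2 - (X k) ^ 2) * (A k) ^ 2) 0 := by
      have h := (((hasDerivAt_id (0 : ℝ)).mul_const ((A k) ^ 2)).sub_const ((X k) ^ 2)).fun_pow 2
      refine h.congr_deriv ?_
      simp [id_eq]
    have h2 : HasDerivAt (fun t : ℝ => t * (1 + β₁ * (A k) ^ 2) + β₂ * (X k) ^ 2)
        (1 + β₁ * (A k) ^ 2) 0 := by
      simpa using ((hasDerivAt_id (0 : ℝ)).mul_const (1 + β₁ * (A k) ^ 2)).add_const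
        (β₂ * (X k) ^ 2)
    have h := h1.fun_div h2 hden
    refine h.congr_deriv ?_
    have hβ₂0 : β₂ ≠ 0 := hβ₂.ne'
    field_simp
    ring
  have hd : HasDerivAt g
      ((1 / (m : ℝ)) * ∑ k, (-(1 / β₂ ^ 2) - ((β₁ + 2 * β₂) / β₂ ^ 2) * (A k) ^ 2)) 0 := by
    exact (HasDerivAt.fun_sum (fun k _ => hterm k)).const_mul _
  have hmne : (m : ℝ) ≠ 0 := Nat.cast_ne_zero.mpr hm.ne'
  have hval : (1 / (m : ℝ)) * ∑ k, (-(1 / β₂ ^ 2) - ((β₁ + 2 * β₂) / β₂ ^ 2) * (A k) ^ 2)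
      = -(1 / β₂ ^ 2) - ((β₁ + 2 * β₂) / β₂ ^ 2) * ((1 / (m : ℝ)) * ∑ k, (A k) ^ 2) := by
    rw [Finset.sum_sub_distrib, Finset.sum_const, Finset.card_univ, Fintype.card_fin, nsmul_eq_mul, ← Finset.mul_sum]
    have hβ₂0 : β₂ ≠ 0 := hβ₂.ne'
    field_simp
  have hderiv : derivWithin g (Set.Ici 0) 0
      = -(1 / β₂ ^ 2) - ((β₁ + 2 * β₂) / β₂ ^ 2) * ((1 / (m : ℝ)) * ∑ k, (A k) ^ 2) := by
    rw [DifferentiableAt.derivWithin hd.differentiableAt (uniqueDiffOn_Ici 0 0 Set.self_mem_Ici), hd.deriv]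
    exact hval
  refine ⟨hderiv, ?_⟩
  rw [hderiv]
  have h1 : 0 < 1 / β₂ ^ 2 := by positivity
  have h2 : 0 ≤ ((β₁ + 2 * β₂) / β₂ ^ 2) * ((1 / (m : ℝ)) * ∑ k, (A k) ^ 2) := by
    have : 0 ≤ ∑ k, (A k) ^ 2 := Finset.sum_nonneg fun k _ => sq_nonneg _
    positivity
  linarith
end
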